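/- arXiv:2401.06347 — 8 statements merged into one kernel-verified Lean document; each statement's English description precedes it below -/
import Mathlib

section
/- Assume ν has no atoms and let s ∈ (0,1) with p ≤ s. Then μ({y ∈ ℝ : F(y) ≤ s}) = s; that is, if Y has law μ, then Pr(F(Y) ≤ s) = s whenever the zero-probability p is at most s. -/
/-! For the CDF `F` of any probability measure on `ℝ`, the lower set `{F ≤ s}` is `Iic t` or
`Iio t`, so its mass is `F t` or `F (t⁻)`, at most `s` either way; and when `s = F t₀` it contains
`Iic t₀`, so its mass is exactly `s`. Here `F 0 = p ≤ s`, `F → 1 > s`, and `F` is continuous on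
`(0, ∞)` because `μ` has no atoms there, so the intermediate value theorem provides `t₀`. -/

open MeasureTheory Set
open Filter Topology ProbabilityTheory

lemma measure_setOf_cdf_le_le (μ : Measure ℝ) [IsProbabilityMeasure μ] (s : ℝ) :
    μ {y | cdf μ y ≤ s} ≤ ENNReal.ofReal s := by
  set S := {y | cdf μ y ≤ s}
  by_cases hbdd : BddAbove S
  swap
  · have hle : ∀ y, cdf μ y ≤ s := fun y ↦ by
      obtain ⟨z, hzS, hyz⟩ := not_bddAbove_iff.mp hbdd y
      exact (monotone_cdf μ hyz.le).trans hzS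
    have hs : 1 ≤ s := le_of_tendsto' (tendsto_cdf_atTop μ) hle
    calc μ S ≤ 1 := prob_le_one
      _ ≤ ENNReal.ofReal s := by simpa using hs
  rcases S.eq_empty_or_nonempty with hS | hS
  · simp [hS]
  set t := sSup S
  by_cases ht : t ∈ S
  · calc μ S ≤ μ (Iic t) := measure_mono fun y hy ↦ le_csSup hbdd hy
      _ = ENNReal.ofReal (cdf μ t) := (ofReal_cdf μ t).symm
      _ ≤ ENNReal.ofReal s := ENNReal.ofReal_le_ofReal ht
  · have hleft : Function.leftLim (cdf μ) t ≤ s := by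
      refine le_of_tendsto ((monotone_cdf μ).tendsto_leftLim t) ?_
      filter_upwards [self_mem_nhdsWithin] with y hy
      obtain ⟨z, hzS, hyz⟩ := exists_lt_of_lt_csSup hS hy
      exact (monotone_cdf μ hyz.le).trans hzS
    calc μ S ≤ μ (Iio t) :=
          measure_mono fun y hy ↦ (le_csSup hbdd hy).lt_of_ne fun h ↦ ht (by rwa [h] at hy)
      _ = (cdf μ).measure (Iio t) := by rw [measure_cdf]
      _ = ENNReal.ofReal (Function.leftLim (cdf μ) t) := by
          rw [(cdf μ).measure_Iio (tendsto_cdf_atBot μ), sub_zero]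
      _ ≤ ENNReal.ofReal s := ENNReal.ofReal_le_ofReal hleft

lemma measure_setOf_cdf_le_of_cdf_eq (μ : Measure ℝ) [IsProbabilityMeasure μ] {s t : ℝ}
    (ht : cdf μ t = s) : μ {y | cdf μ y ≤ s} = ENNReal.ofReal s := by
  refine (measure_setOf_cdf_le_le μ s).antisymm ?_
  calc ENNReal.ofReal s = μ (Iic t) := ht ▸ ofReal_cdf μ t
    _ ≤ μ {y | cdf μ y ≤ s} := measure_mono fun y hy ↦ ht ▸ monotone_cdf μ hy

lemma continuousAt_cdf_of_measure_singleton (μ : Measure ℝ) [IsProbabilityMeasure μ] {x : ℝ}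
    (hx : μ {x} = 0) : ContinuousAt (cdf μ) x := by
  have hleft : Function.leftLim (cdf μ) x = cdf μ x := by
    rw [← measure_cdf μ, (cdf μ).measure_singleton, ENNReal.ofReal_eq_zero, sub_nonpos] at hx
    exact ((monotone_cdf μ).leftLim_le le_rfl).antisymm hx
  rw [continuousAt_iff_continuous_left_right, ← continuousWithinAt_Iio_iff_Iic]
  exact ⟨(monotone_cdf μ).continuousWithinAt_Iio_iff_leftLim_eq.mpr hleft,
    (cdf μ).right_continuous x⟩

lemma exists_cdf_eq_of_measure_singleton (μ : Measure ℝ) [IsProbabilityMeasure μ] {a s : ℝ}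
    (hatom : ∀ x > a, μ {x} = 0) (has : cdf μ a ≤ s) (hs : s < 1) : ∃ t, cdf μ t = s := by
  obtain ⟨b, hb⟩ :=
    ((tendsto_cdf_atTop μ).eventually (eventually_gt_nhds hs)).exists_forall_of_atTop
  have hcont : ContinuousOn (cdf μ) (Icc a (max a b)) := by
    intro x hx
    rcases hx.1.eq_or_lt with hax | hax
    · rw [← hax]
      exact ((cdf μ).right_continuous a).mono Icc_subset_Ici_self
    · exact (continuousAt_cdf_of_measure_singleton μ (hatom x hax)).continuousWithinAt
  obtain ⟨t, -, ht⟩ := intermediate_value_Icc (le_max_left a b) hcont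
    ⟨has, (hb _ (le_max_right a b)).le⟩
  exact ⟨t, ht⟩

lemma isProbabilityMeasure_ofReal_smul_add {α : Type*} [MeasurableSpace α] {p : ℝ}
    (hp₀ : 0 ≤ p) (hp₁ : p ≤ 1) (μ ν : Measure α) [IsProbabilityMeasure μ]
    [IsProbabilityMeasure ν] :
    IsProbabilityMeasure (ENNReal.ofReal p • μ + ENNReal.ofReal (1 - p) • ν) := by
  constructor
  simp only [Measure.add_apply, Measure.smul_apply, smul_eq_mul, measure_univ, mul_one]
  rw [← ENNReal.ofReal_add hp₀ (sub_nonneg.mpr hp₁), add_sub_cancel, ENNReal.ofReal_one]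

/-- Let `μ = p·δ₀ + (1-p)·ν` be a zero-inflated mixture with `p ∈ (0,1)`,
`ν` a Borel probability measure on `ℝ` with `ν((-∞,0]) = 0` and no atoms, and let
`F(y) = μ((-∞,y])` be its CDF.  If `s ∈ (0,1)` and `p ≤ s`, then
`μ({y : F(y) ≤ s}) = s`, i.e. `Pr(F(Y) ≤ s) = s` when `Y` has law `μ`. -/
theorem stmt1 (p : ℝ) (hp : p ∈ Set.Ioo (0 : ℝ) 1)
    (ν : Measure ℝ) [IsProbabilityMeasure ν] [NullSingletonClass ν] (hν : ν (Set.Iic 0) = 0)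
    (μ : Measure ℝ)
    (hμ : μ = ENNReal.ofReal p • Measure.dirac 0 + ENNReal.ofReal (1 - p) • ν)
    (F : ℝ → ℝ) (hF : ∀ y, F y = (μ (Set.Iic y)).toReal)
    (s : ℝ) (hs : s ∈ Set.Ioo (0 : ℝ) 1) (hps : p ≤ s) :
    μ {y : ℝ | F y ≤ s} = ENNReal.ofReal s := by
  have : IsProbabilityMeasure μ := hμ ▸ isProbabilityMeasure_ofReal_smul_add hp.1.le hp.2.le _ ν
  obtain rfl : F = cdf μ := funext fun y ↦ by rw [hF, cdf_eq_real, measureReal_def]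
  have hcdf0 : cdf μ 0 = p := by
    rw [cdf_eq_real, measureReal_def, hμ]
    simp [hν, hp.1.le]
  have hatom : ∀ x > 0, μ {x} = 0 := fun x hx ↦ by
    simp [hμ, measure_singleton, hx.ne']
  obtain ⟨t, ht⟩ := exists_cdf_eq_of_measure_singleton μ hatom (hcdf0 ▸ hps) hs.2
  exact measure_setOf_cdf_le_of_cdf_eq μ ht
end

section
/- Assume each ν_x has no atoms. Then for every s ∈ (0,1), Pr(F(Y|X) ≤ s) = s · μ_X({x : p₀(x) ≤ s}); in other words, the CDF of the probability integral transform F(Y|X) at s equals s·Pr(p₀(X) ≤ s). -/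
/-!
A nonatomic law `ν` has a continuous CDF `G`, so each sublevel set `{G ≤ t}`, `t < 1`, is a
half-line `Iic m` with `G m = t`: the probability integral transform of `ν` is uniform.
Under `κ x` the CDF vanishes on `(-∞, 0)` and equals `p₀ x + (1 - p₀ x) G_x` on `[0, ∞)`.
Hence `{F(·|x) ≤ s}` is `κ x`-null when `s < p₀ x`, and otherwise it is
`{G_x ≤ (s - p₀ x) / (1 - p₀ x)}`, of `κ x`-mass `p₀ x + (s - p₀ x) = s`.
Integrating over `μX` through the disintegration `law (X, Y) = μX ⊗ κ` gives the claim.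
-/

open MeasureTheory ProbabilityTheory Set
open scoped ENNReal ProbabilityTheory

namespace ProbabilityTheory

lemma continuous_cdf (μ : Measure ℝ) [IsProbabilityMeasure μ] [NullSingletonClass μ] :
    Continuous (cdf μ) := by
  refine continuous_iff_continuousAt.2 fun x => ?_
  rw [(monotone_cdf μ).continuousAt_iff_leftLim_eq_rightLim, StieltjesFunction.rightLim_eq]
  have h := (cdf μ).measure_singleton x
  rw [measure_cdf, measure_singleton, eq_comm, ENNReal.ofReal_eq_zero, sub_nonpos] at h
  exact le_antisymm ((monotone_cdf μ).leftLim_le le_rfl) h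

lemma measure_setOf_cdf_le (μ : Measure ℝ) [IsProbabilityMeasure μ] [NullSingletonClass μ]
    {t : ℝ} (ht : t < 1) : μ {y | cdf μ y ≤ t} = ENNReal.ofReal t := by
  set S := {y | cdf μ y ≤ t}
  rcases S.eq_empty_or_nonempty with hS | hS
  · have ht0 : t ≤ 0 := ge_of_tendsto' (tendsto_cdf_atBot μ) fun y =>
      (not_le.1 fun hy => hS.subset hy).le
    rw [hS, measure_empty, ENNReal.ofReal_of_nonpos ht0]
  have hbdd : BddAbove S := by
    obtain ⟨b, hb⟩ :=
      ((tendsto_cdf_atTop μ).eventually (lt_mem_nhds ht)).exists_forall_of_atTop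
    exact ⟨b, fun y hy => not_lt.1 fun hby => (hb y hby.le).not_ge hy⟩
  set m := sSup S
  have hm : m ∈ S := (isClosed_le (continuous_cdf μ) continuous_const).csSup_mem hS hbdd
  have hSeq : S = Iic m :=
    Subset.antisymm (fun y hy => le_csSup hbdd hy) fun y hy => (monotone_cdf μ hy).trans hm
  have hcdf : cdf μ m = t := by
    refine le_antisymm hm (ge_of_tendsto ((continuous_cdf μ).tendsto m |>.mono_left
      (nhdsWithin_le_nhds (s := Ioi m))) (eventually_nhdsWithin_of_forall fun y hy => ?_))
    exact (not_le.1 fun h => (not_le.2 hy) (le_csSup hbdd h)).le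
  rw [hSeq, ← ofReal_cdf, hcdf]

lemma Kernel.measurable_cdf_uncurry {α : Type*} [MeasurableSpace α]
    (κ : Kernel α ℝ) [IsMarkovKernel κ] :
    Measurable fun q : α × ℝ => cdf (κ q.1) q.2 := by
  simp_rw [cdf_eq_real, measureReal_def]
  exact (Kernel.measurable_kernel_prodMk_left (κ := κ.comap Prod.fst measurable_fst)
    (measurableSet_le measurable_snd measurable_fst.snd)).ennreal_toReal

section Mixture

variable {μ ν : Measure ℝ} [IsProbabilityMeasure μ] [IsProbabilityMeasure ν] {p : ℝ}

lemma cdf_eq_of_eq_smul_dirac_add_smul (hp : p ∈ Icc 0 1)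
    (hμ : μ = ENNReal.ofReal p • Measure.dirac 0 + ENNReal.ofReal (1 - p) • ν) (y : ℝ) :
    cdf μ y = (if 0 ≤ y then p else 0) + (1 - p) * cdf ν y := by
  rw [cdf_eq_real, cdf_eq_real, hμ]
  by_cases hy : 0 ≤ y
  · simp only [hy, if_true, measureReal_def, Measure.add_apply, Measure.smul_apply, smul_eq_mul,
      Measure.dirac_apply_of_mem (mem_Iic.2 hy), mul_one]
    rw [ENNReal.toReal_add (by finiteness) (by finiteness), ENNReal.toReal_mul,
      ENNReal.toReal_ofReal hp.1, ENNReal.toReal_ofReal (sub_nonneg.2 hp.2)]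
  · simp [hy, measureReal_def, hp.2]

lemma measure_setOf_cdf_le_of_eq_smul_dirac_add_smul [NullSingletonClass ν] (hν0 : ν (Iic 0) = 0)
    (hp : p ∈ Ico 0 1) {s : ℝ} (hs : s < 1)
    (hμ : μ = ENNReal.ofReal p • Measure.dirac 0 + ENNReal.ofReal (1 - p) • ν) :
    μ {y | cdf μ y ≤ s} = if p ≤ s then ENNReal.ofReal s else 0 := by
  have hcdf := cdf_eq_of_eq_smul_dirac_add_smul (Ico_subset_Icc_self hp) hμ
  have hcdfν : ∀ y ≤ 0, cdf ν y = 0 := fun y hy => by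
    rw [cdf_eq_real, measureReal_def, measure_mono_null (Iic_subset_Iic.2 hy) hν0,
      ENNReal.toReal_zero]
  have hp1 : 0 < 1 - p := sub_pos.2 hp.2
  split_ifs with hps
  · set t := (s - p) / (1 - p)
    have ht : t < 1 := (div_lt_one hp1).2 (by linarith)
    have hset : {y | cdf μ y ≤ s} = {y | cdf ν y ≤ t} := by
      ext y
      simp only [mem_ofPred_eq, hcdf]
      rcases lt_or_ge y 0 with hy | hy
      · simp only [hy.not_ge, if_false, hcdfν y hy.le, mul_zero, zero_add]
        exact iff_of_true (hp.1.trans hps) (div_nonneg (sub_nonneg.2 hps) hp1.le)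
      · rw [if_pos hy, le_div_iff₀ hp1]
        constructor <;> intro h <;> linarith
    have h0 : (0 : ℝ) ∈ {y | cdf ν y ≤ t} := by
      simp only [mem_ofPred_eq, hcdfν 0 le_rfl]
      exact div_nonneg (sub_nonneg.2 hps) hp1.le
    rw [hset, hμ, Measure.add_apply, Measure.smul_apply, Measure.smul_apply,
      measure_setOf_cdf_le ν ht, Measure.dirac_apply_of_mem h0, smul_eq_mul, smul_eq_mul, mul_one,
      ← ENNReal.ofReal_mul hp1.le,
      ← ENNReal.ofReal_add hp.1 (mul_nonneg hp1.le (div_nonneg (sub_nonneg.2 hps) hp1.le)),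
      mul_div_cancel₀ _ hp1.ne', add_sub_cancel]
  · have hsub : {y | cdf μ y ≤ s} ⊆ Iio 0 := fun y hy => not_le.1 fun hy0 => hps <| by
      rw [mem_ofPred_eq, hcdf, if_pos hy0] at hy
      nlinarith [cdf_nonneg ν y]
    refine measure_mono_null hsub ?_
    rw [hμ, Measure.add_apply, Measure.smul_apply, Measure.smul_apply,
      measure_mono_null Iio_subset_Iic_self hν0]
    simp

end Mixture

end ProbabilityTheory

/-- Semicontinuous regression setup.  `X : Ω → ℝ^d` has law `μ_X`,
`p₀ : ℝ^d → (0,1)` is measurable, `κ(x) = p₀(x)·δ₀ + (1-p₀(x))·ν_x` is a Markov kernel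
with each `ν_x` a nonatomic Borel probability measure on `ℝ` vanishing on `(-∞,0]`,
`F(y|x) = κ(x)((-∞,y])`, and the joint law of `(X,Y)` is `μ_X ⊗ κ`.  Then for every
`s ∈ (0,1)`, `Pr(F(Y|X) ≤ s) = s · μ_X({x : p₀(x) ≤ s})`. -/
theorem stmt2 {d : ℕ} {Ω : Type*} [MeasurableSpace Ω] (P : Measure Ω)
    [IsProbabilityMeasure P]
    (X : Ω → (Fin d → ℝ)) (hX : Measurable X)
    (Y : Ω → ℝ) (hY : Measurable Y)
    (μX : Measure (Fin d → ℝ)) (hμX : μX = P.map X)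
    (p₀ : (Fin d → ℝ) → ℝ) (hp₀ : Measurable p₀)
    (hp₀mem : ∀ x, p₀ x ∈ Set.Ioo (0 : ℝ) 1)
    (ν : (Fin d → ℝ) → Measure ℝ) (hν : ∀ x, IsProbabilityMeasure (ν x))
    (hν0 : ∀ x, ν x (Set.Iic 0) = 0) (hνatom : ∀ x, NoAtoms (ν x))
    (κ : Kernel (Fin d → ℝ) ℝ) [IsMarkovKernel κ]
    (hκ : ∀ x, κ x = ENNReal.ofReal (p₀ x) • Measure.dirac 0
        + ENNReal.ofReal (1 - p₀ x) • ν x)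
    (F : ℝ → (Fin d → ℝ) → ℝ) (hF : ∀ y x, F y x = (κ x (Set.Iic y)).toReal)
    (hjoint : P.map (fun ω => (X ω, Y ω)) = μX ⊗ₘ κ)
    (s : ℝ) (hs : s ∈ Set.Ioo (0 : ℝ) 1) :
    P {ω : Ω | F (Y ω) (X ω) ≤ s} = ENNReal.ofReal s * μX {x | p₀ x ≤ s} := by
  have : IsProbabilityMeasure μX := hμX ▸ Measure.isProbabilityMeasure_map hX.aemeasurable
  set T := {q : (Fin d → ℝ) × ℝ | cdf (κ q.1) q.2 ≤ s}
  have hT : MeasurableSet T := measurableSet_le κ.measurable_cdf_uncurry measurable_const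
  have hpreimage : {ω | F (Y ω) (X ω) ≤ s} = (fun ω => (X ω, Y ω)) ⁻¹' T := by
    ext ω
    simp [T, hF, cdf_eq_real, measureReal_def]
  have hfiber (x) :
      κ x (Prod.mk x ⁻¹' T) = {x | p₀ x ≤ s}.indicator (fun _ => ENNReal.ofReal s) x := by
    have := hν x
    have : NullSingletonClass (ν x) := hνatom x
    rw [indicator_apply]
    exact measure_setOf_cdf_le_of_eq_smul_dirac_add_smul (hν0 x)
      (Ioo_subset_Ico_self (hp₀mem x)) hs.2 (hκ x)
  rw [hpreimage, ← Measure.map_apply (hX.prodMk hY) hT, hjoint, Measure.compProd_apply hT,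
    lintegral_congr hfiber, lintegral_indicator_const (measurableSet_le hp₀ measurable_const)]
end

section
/- Assume each ν_x has no atoms, and suppose there exists s ∈ (0,1) such that μ_X({x : p₀(x) ≤ s}) < 1. Then the law of F(Y|X) is not the uniform distribution on [0,1] (Lebesgue measure restricted to [0,1]); i.e., in the presence of a point mass at zero the probability integral transform of the outcome is not uniformly distributed. -/
/-!
For any finite measure `μ` on `ℝ` with distribution function `F`, one has `μ {F ≤ s} ≤ s`:
by inner regularity it suffices to bound compact subsets of the lower set `{F ≤ s}`, and such a
set lies in `Iic m` for its maximum `m`, where `F m ≤ s`. If moreover `μ` lives on `[0, ∞)` and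
has an atom of mass `p > s` at `0`, then `F ≥ p` on `[0, ∞)`, so `μ {F ≤ s} = 0`. Applying this
to the conditional laws `κ x` and integrating over `μ_X` gives
`ℙ (F(Y|X) ≤ s) ≤ s · μ_X {p₀ ≤ s} < s`, whereas the uniform law gives `Iic s` mass `s`.
-/

open MeasureTheory ProbabilityTheory Set
open scoped ENNReal ProbabilityTheory

theorem measure_setOf_measureReal_Iic_le (μ : Measure ℝ) [IsFiniteMeasure μ] (s : ℝ) :
    μ {y | μ.real (Iic y) ≤ s} ≤ ENNReal.ofReal s := by
  have hmono : Monotone fun y => μ.real (Iic y) := fun a b hab =>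
    measureReal_mono (Iic_subset_Iic.mpr hab)
  rw [(measurableSet_le hmono.measurable measurable_const).measure_eq_iSup_isCompact]
  refine iSup₂_le fun K hK => iSup_le fun hKc => ?_
  rcases K.eq_empty_or_nonempty with rfl | hne
  · simp
  have hmax := hKc.sSup_mem hne
  calc μ K ≤ μ (Iic (sSup K)) := measure_mono fun y hy => le_csSup hKc.bddAbove hy
    _ = ENNReal.ofReal (μ.real (Iic (sSup K))) := (ofReal_measureReal (measure_ne_top _ _)).symm
    _ ≤ ENNReal.ofReal s := ENNReal.ofReal_le_ofReal (hK hmax)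

theorem measure_setOf_measureReal_Iic_le_eq_zero_of_lt_singleton (μ : Measure ℝ)
    [IsFiniteMeasure μ] {a s : ℝ} (hneg : μ (Iio a) = 0) (hatom : s < μ.real {a}) :
    μ {y | μ.real (Iic y) ≤ s} = 0 := by
  refine measure_mono_null (fun y hy => ?_) hneg
  by_contra hya
  have : μ.real {a} ≤ μ.real (Iic y) := measureReal_mono (by simpa using not_lt.mp hya)
  exact hy.not_gt (hatom.trans_le this)

theorem measure_setOf_measureReal_Iic_le_of_eq_dirac_add (μ ν : Measure ℝ) [IsFiniteMeasure μ]
    {p s : ℝ} {c : ℝ≥0∞} (hν0 : ν (Iic 0) = 0)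
    (hμ : μ = ENNReal.ofReal p • Measure.dirac 0 + c • ν) :
    μ {y | μ.real (Iic y) ≤ s} ≤ if p ≤ s then ENNReal.ofReal s else 0 := by
  split_ifs with hps
  · exact measure_setOf_measureReal_Iic_le μ s
  refine (measure_setOf_measureReal_Iic_le_eq_zero_of_lt_singleton μ (a := 0) ?_ ?_).le
  · have : ν (Iio 0) = 0 := measure_mono_null Iio_subset_Iic_self hν0
    simp [hμ, this]
  · have : ENNReal.ofReal p ≤ μ {0} := by simp [hμ]
    exact (not_le.mp hps).trans_le ((ENNReal.ofReal_le_iff_le_toReal (measure_ne_top _ _)).mp this)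

theorem ProbabilityTheory.Kernel.measurable_measure_Iic {α : Type*} [MeasurableSpace α]
    (κ : Kernel α ℝ) [IsSFiniteKernel κ] : Measurable fun p : α × ℝ => κ p.1 (Iic p.2) :=
  Kernel.measurable_kernel_prodMk_left (κ := κ.comap Prod.fst measurable_fst)
    (measurableSet_le measurable_snd measurable_fst.snd)

theorem map_measureReal_Iic_apply_Iic {α Ω : Type*} [MeasurableSpace α] [MeasurableSpace Ω]
    (P : Measure Ω) {X : Ω → α} {Y : Ω → ℝ} (hX : Measurable X) (hY : Measurable Y)
    (μ : Measure α) [SFinite μ] (κ : Kernel α ℝ) [IsSFiniteKernel κ]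
    (hjoint : P.map (fun ω => (X ω, Y ω)) = μ ⊗ₘ κ) (s : ℝ) :
    P.map (fun ω => (κ (X ω)).real (Iic (Y ω))) (Iic s)
      = ∫⁻ x, κ x {y | (κ x).real (Iic y) ≤ s} ∂μ := by
  have hG : Measurable fun p : α × ℝ => (κ p.1).real (Iic p.2) :=
    κ.measurable_measure_Iic.ennreal_toReal
  change P.map ((fun p : α × ℝ => (κ p.1).real (Iic p.2)) ∘ fun ω => (X ω, Y ω)) (Iic s)
    = _
  rw [← Measure.map_map hG (hX.prodMk hY), hjoint, Measure.map_apply hG measurableSet_Iic,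
    Measure.compProd_apply (hG measurableSet_Iic)]
  rfl

theorem stmt3_general {d : ℕ} {Ω : Type*} [MeasurableSpace Ω] (P : Measure Ω)
    [IsProbabilityMeasure P]
    (X : Ω → (Fin d → ℝ)) (hX : Measurable X)
    (Y : Ω → ℝ) (hY : Measurable Y)
    (μX : Measure (Fin d → ℝ)) (hμX : μX = P.map X)
    (p₀ : (Fin d → ℝ) → ℝ)
    (ν : (Fin d → ℝ) → Measure ℝ)
    (hν0 : ∀ x, ν x (Set.Iic 0) = 0)
    (κ : Kernel (Fin d → ℝ) ℝ) [IsMarkovKernel κ]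
    (hκ : ∀ x, κ x = ENNReal.ofReal (p₀ x) • Measure.dirac 0
        + ENNReal.ofReal (1 - p₀ x) • ν x)
    (F : ℝ → (Fin d → ℝ) → ℝ) (hF : ∀ y x, F y x = (κ x (Set.Iic y)).toReal)
    (hjoint : P.map (fun ω => (X ω, Y ω)) = μX ⊗ₘ κ)
    (hexists : ∃ s ∈ Set.Ioo (0 : ℝ) 1, μX {x | p₀ x ≤ s} < 1) :
    P.map (fun ω => F (Y ω) (X ω)) ≠ volume.restrict (Set.Icc (0 : ℝ) 1) := by
  obtain ⟨s, ⟨hs0, hs1⟩, hlt⟩ := hexists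
  intro hunif
  have : IsFiniteMeasure μX := hμX ▸ inferInstance
  have hPIT : (fun ω => F (Y ω) (X ω)) = fun ω => (κ (X ω)).real (Iic (Y ω)) :=
    funext fun ω => hF _ _
  have hunif_Iic : volume.restrict (Icc (0 : ℝ) 1) (Iic s) = ENNReal.ofReal s := by
    rw [Measure.restrict_apply measurableSet_Iic, inter_comm, ← Ici_inter_Iic, inter_assoc,
      Iic_inter_Iic, min_eq_right hs1.le, Ici_inter_Iic, Real.volume_Icc, sub_zero]
  have hle : ENNReal.ofReal s ≤ ENNReal.ofReal s * μX {x | p₀ x ≤ s} :=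
    calc ENNReal.ofReal s = P.map (fun ω => F (Y ω) (X ω)) (Iic s) := by rw [hunif, hunif_Iic]
      _ = ∫⁻ x, κ x {y | (κ x).real (Iic y) ≤ s} ∂μX := by
        rw [hPIT]; exact map_measureReal_Iic_apply_Iic P hX hY μX κ hjoint s
      _ ≤ ∫⁻ x, {x | p₀ x ≤ s}.indicator (fun _ => ENNReal.ofReal s) x ∂μX :=
        lintegral_mono fun x =>
          measure_setOf_measureReal_Iic_le_of_eq_dirac_add (κ x) (ν x) (hν0 x) (hκ x)
      _ ≤ ENNReal.ofReal s * μX {x | p₀ x ≤ s} := lintegral_indicator_const_le _ _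
  have hpos : ENNReal.ofReal s ≠ 0 := ENNReal.ofReal_ne_zero_iff.mpr hs0
  exact hle.not_gt (by simpa using ENNReal.mul_lt_mul_right hpos ENNReal.ofReal_ne_top hlt)

/-- In the semicontinuous regression setup (each `ν_x` nonatomic), if there
exists `s ∈ (0,1)` with `μ_X({x : p₀(x) ≤ s}) < 1`, then the law of the probability
integral transform `F(Y|X)` is not the uniform distribution on `[0,1]` (Lebesgue measure
restricted to `[0,1]`). -/
theorem stmt3 {d : ℕ} {Ω : Type*} [MeasurableSpace Ω] (P : Measure Ω)
    [IsProbabilityMeasure P]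
    (X : Ω → (Fin d → ℝ)) (hX : Measurable X)
    (Y : Ω → ℝ) (hY : Measurable Y)
    (μX : Measure (Fin d → ℝ)) (hμX : μX = P.map X)
    (p₀ : (Fin d → ℝ) → ℝ) (hp₀ : Measurable p₀)
    (hp₀mem : ∀ x, p₀ x ∈ Set.Ioo (0 : ℝ) 1)
    (ν : (Fin d → ℝ) → Measure ℝ) (hν : ∀ x, IsProbabilityMeasure (ν x))
    (hν0 : ∀ x, ν x (Set.Iic 0) = 0) (hνatom : ∀ x, NoAtoms (ν x))
    (κ : Kernel (Fin d → ℝ) ℝ) [IsMarkovKernel κ]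
    (hκ : ∀ x, κ x = ENNReal.ofReal (p₀ x) • Measure.dirac 0
        + ENNReal.ofReal (1 - p₀ x) • ν x)
    (F : ℝ → (Fin d → ℝ) → ℝ) (hF : ∀ y x, F y x = (κ x (Set.Iic y)).toReal)
    (hjoint : P.map (fun ω => (X ω, Y ω)) = μX ⊗ₘ κ)
    (hexists : ∃ s ∈ Set.Ioo (0 : ℝ) 1, μX {x | p₀ x ≤ s} < 1) :
    P.map (fun ω => F (Y ω) (X ω)) ≠ volume.restrict (Set.Icc (0 : ℝ) 1) :=
  stmt3_general P X hX Y hY μX hμX p₀ ν hν0 κ hκ F hF hjoint hexists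
end

section
/- Assume each ν_x has no atoms and the law of p₀(X) (the pushforward of μ_X by p₀) has no atoms. Then the law of the random variable F(Y|X) has no atoms. -/
open MeasureTheory ProbabilityTheory Set
open scoped ENNReal ProbabilityTheory

/-!
Conditionally on `X = x`, the event `F(Y|X) = c` is the event that `Y` falls in a level set of
the CDF of `κ x`. Such a level set is an interval on which the CDF is constant, so it carries
no mass except possibly at an atom of `κ x` lying in it. The only atom of `κ x` is `0`, where the
CDF equals `p₀ x`; hence the conditional probability vanishes unless `p₀ X = c`, which has
probability zero.
-/

theorem measure_setOf_measure_Iic_eq_eq_zero (ρ : Measure ℝ) [IsFiniteMeasure ρ] {s : ℝ≥0∞}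
    (hatom : ∀ a, ρ (Iic a) = s → ρ {a} = 0) : ρ {y | ρ (Iic y) = s} = 0 := by
  set S := {y | ρ (Iic y) = s}
  have hIoc : ∀ a ∈ S, ∀ b ∈ S, ρ (Ioc a b) = 0 := by
    intro a ha b hb
    rcases le_total b a with hba | hab
    · rw [Ioc_eq_empty hba.not_gt, measure_empty]
    · rw [← Iic_sdiff_Iic, measure_sdiff (Iic_subset_Iic.mpr hab) nullMeasurableSet_Iic
        (measure_ne_top ρ _), ha, hb, tsub_self]
  have hsub : ∀ t ⊆ S, t.Subsingleton → ρ t = 0 := by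
    intro t htS ht
    rcases ht.eq_empty_or_singleton with rfl | ⟨a, rfl⟩
    · exact measure_empty
    · exact hatom a (htS rfl)
  have hcover : S ⊆ ({y ∈ S | ∀ b ∈ S, b ≤ y} ∪ {y ∈ S | ∀ b ∈ S, y ≤ b}) ∪
      ⋃ (q : ℚ) (r : ℚ) (_ : ρ (Ioc (q : ℝ) r) = 0), Ioc (q : ℝ) r := by
    intro y hy
    by_cases hmax : ∀ b ∈ S, b ≤ y
    · exact Or.inl (Or.inl ⟨hy, hmax⟩)
    by_cases hmin : ∀ b ∈ S, y ≤ b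
    · exact Or.inl (Or.inr ⟨hy, hmin⟩)
    push Not at hmax hmin
    obtain ⟨b, hbS, hyb⟩ := hmax
    obtain ⟨a, haS, hay⟩ := hmin
    obtain ⟨q, haq, hqy⟩ := exists_rat_btwn hay
    obtain ⟨r, hyr, hrb⟩ := exists_rat_btwn hyb
    refine Or.inr (mem_iUnion₂.mpr ⟨q, r, mem_iUnion.mpr ⟨?_, hqy, hyr.le⟩⟩)
    exact measure_mono_null (Ioc_subset_Ioc haq.le hrb.le) (hIoc a haS b hbS)
  refine measure_mono_null hcover (measure_union_null (measure_union_null ?_ ?_) ?_)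
  · exact hsub _ (fun _ h => h.1) fun x hx y hy => le_antisymm (hy.2 x hx.1) (hx.2 y hy.1)
  · exact hsub _ (fun _ h => h.1) fun x hx y hy => le_antisymm (hx.2 y hy.1) (hy.2 x hx.1)
  · exact measure_iUnion_null fun q => measure_iUnion_null fun r => measure_iUnion_null id

theorem smul_dirac_add_smul_apply_singleton (w w' : ℝ≥0∞) (z a : ℝ) (ν : Measure ℝ)
    [NullSingletonClass ν] :
    (w • Measure.dirac z + w' • ν) {a} = (w • Measure.dirac z) {a} := by
  simp

theorem smul_dirac_add_smul_apply_Iic_self (w w' : ℝ≥0∞) {z : ℝ} {ν : Measure ℝ}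
    (hνz : ν (Iic z) = 0) : (w • Measure.dirac z + w' • ν) (Iic z) = w := by
  simp [hνz]

theorem measure_setOf_toReal_measure_Iic_eq_eq_zero_of_eq_smul_dirac_add {ν : Measure ℝ}
    [NullSingletonClass ν] {z p c : ℝ} (hpc : p ≠ c) (w : ℝ≥0∞) (hνz : ν (Iic z) = 0)
    (ρ : Measure ℝ) [IsFiniteMeasure ρ] (hρ : ρ = ENNReal.ofReal p • Measure.dirac z + w • ν) :
    ρ {y | (ρ (Iic y)).toReal = c} = 0 := by
  refine measure_mono_null (fun y (hy : (ρ (Iic y)).toReal = c) => ?_)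
    (measure_setOf_measure_Iic_eq_eq_zero ρ (s := ENNReal.ofReal c) fun a ha => ?_)
  · rw [mem_ofPred_eq, ← hy, ENNReal.ofReal_toReal (measure_ne_top ρ _)]
  by_contra hρa
  rw [hρ, smul_dirac_add_smul_apply_singleton] at hρa
  obtain ⟨rfl, hp⟩ : z = a ∧ 0 < p := by simpa [Pi.single_apply] using hρa
  rw [hρ, smul_dirac_add_smul_apply_Iic_self _ _ hνz] at ha
  have hc : 0 < c := ENNReal.ofReal_pos.mp (ha ▸ ENNReal.ofReal_pos.mpr hp)
  exact hpc ((ENNReal.ofReal_eq_ofReal_iff hp.le hc.le).mp ha)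

theorem MeasureTheory.Measure.nullSingletonClass_map_compProd {α β γ : Type*} [MeasurableSpace α]
    [MeasurableSpace β] [MeasurableSpace γ] [MeasurableSingletonClass γ] (μ : Measure α)
    [SFinite μ] (κ : Kernel α β) [IsSFiniteKernel κ] {g : α × β → γ} (hg : Measurable g)
    (h : ∀ c, ∀ᵐ x ∂μ, κ x {y | g (x, y) = c} = 0) : NullSingletonClass ((μ ⊗ₘ κ).map g) where
  measure_singleton c := by
    rw [Measure.map_apply hg (measurableSet_singleton c),
      Measure.compProd_apply (hg (measurableSet_singleton c))]
    exact (lintegral_congr_ae (h c)).trans lintegral_zero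

theorem MeasureTheory.ae_ne_of_nullSingletonClass_map {α β : Type*} [MeasurableSpace α]
    [MeasurableSpace β] [MeasurableSingletonClass β] {μ : Measure α} {f : α → β}
    (hf : Measurable f) [NullSingletonClass (μ.map f)] (c : β) : ∀ᵐ x ∂μ, f x ≠ c :=
  (ae_map_iff hf.aemeasurable (measurableSet_singleton c).compl).mp ((μ.map f).ae_ne c)

theorem stmt4_general {d : ℕ} {Ω : Type*} [MeasurableSpace Ω] (P : Measure Ω)
    [IsProbabilityMeasure P]
    (X : Ω → (Fin d → ℝ)) (hX : Measurable X)
    (Y : Ω → ℝ) (hY : Measurable Y)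
    (μX : Measure (Fin d → ℝ)) (hμX : μX = P.map X)
    (p₀ : (Fin d → ℝ) → ℝ) (hp₀ : Measurable p₀)
    (ν : (Fin d → ℝ) → Measure ℝ)
    (hν0 : ∀ x, ν x (Set.Iic 0) = 0) (hνatom : ∀ x, NoAtoms (ν x))
    (κ : Kernel (Fin d → ℝ) ℝ) [IsMarkovKernel κ]
    (hκ : ∀ x, κ x = ENNReal.ofReal (p₀ x) • Measure.dirac 0
        + ENNReal.ofReal (1 - p₀ x) • ν x)
    (F : ℝ → (Fin d → ℝ) → ℝ) (hF : ∀ y x, F y x = (κ x (Set.Iic y)).toReal)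
    (hjoint : P.map (fun ω => (X ω, Y ω)) = μX ⊗ₘ κ)
    (hp₀X : NoAtoms (P.map (fun ω => p₀ (X ω)))) :
    NoAtoms (P.map (fun ω => F (Y ω) (X ω))) := by
  subst hμX
  have hFmeas : Measurable fun p : (Fin d → ℝ) × ℝ => F p.2 p.1 := by
    simp only [hF]
    exact κ.measurable_measure_Iic.ennreal_toReal
  have hlaw : P.map (fun ω => F (Y ω) (X ω)) = ((P.map X) ⊗ₘ κ).map fun p => F p.2 p.1 := by
    rw [← hjoint, Measure.map_map hFmeas (hX.prodMk hY)]
    rfl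
  have : NullSingletonClass ((P.map X).map p₀) := by rwa [Measure.map_map hp₀ hX]
  rw [hlaw]
  refine Measure.nullSingletonClass_map_compProd _ κ hFmeas fun c =>
    (ae_ne_of_nullSingletonClass_map hp₀ c).mono fun x hpc => ?_
  have : NullSingletonClass (ν x) := hνatom x
  simp only [hF]
  exact measure_setOf_toReal_measure_Iic_eq_eq_zero_of_eq_smul_dirac_add hpc _ (hν0 x) _ (hκ x)

/-- In the semicontinuous regression setup, if each `ν_x` has no atoms and
the law of `p₀(X)` has no atoms, then the law of `F(Y|X)` has no atoms. -/
theorem stmt4 {d : ℕ} {Ω : Type*} [MeasurableSpace Ω] (P : Measure Ω)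
    [IsProbabilityMeasure P]
    (X : Ω → (Fin d → ℝ)) (hX : Measurable X)
    (Y : Ω → ℝ) (hY : Measurable Y)
    (μX : Measure (Fin d → ℝ)) (hμX : μX = P.map X)
    (p₀ : (Fin d → ℝ) → ℝ) (hp₀ : Measurable p₀)
    (hp₀mem : ∀ x, p₀ x ∈ Set.Ioo (0 : ℝ) 1)
    (ν : (Fin d → ℝ) → Measure ℝ) (hν : ∀ x, IsProbabilityMeasure (ν x))
    (hν0 : ∀ x, ν x (Set.Iic 0) = 0) (hνatom : ∀ x, NoAtoms (ν x))
    (κ : Kernel (Fin d → ℝ) ℝ) [IsMarkovKernel κ]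
    (hκ : ∀ x, κ x = ENNReal.ofReal (p₀ x) • Measure.dirac 0
        + ENNReal.ofReal (1 - p₀ x) • ν x)
    (F : ℝ → (Fin d → ℝ) → ℝ) (hF : ∀ y x, F y x = (κ x (Set.Iic y)).toReal)
    (hjoint : P.map (fun ω => (X ω, Y ω)) = μX ⊗ₘ κ)
    (hp₀X : NoAtoms (P.map (fun ω => p₀ (X ω)))) :
    NoAtoms (P.map (fun ω => F (Y ω) (X ω))) :=
  stmt4_general P X hX Y hY μX hμX p₀ hp₀ ν hν0 hνatom κ hκ F hF hjoint hp₀X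
end

section
/- Let (X₁,Y₁), (X₂,Y₂), … be i.i.d. with the joint law μ_X ⊗ κ, and let Ĥ_n be the empirical estimator built from X₁,…,X_n. Then almost surely, max_{1 ≤ i ≤ n} |Ĥ_n(F(Y_i|X_i)) − H(F(Y_i|X_i))| → 0 as n → ∞; i.e., with the true model known, the proposed residuals converge uniformly to the uniformly distributed model errors. -/
/-!
Write `G` for the CDF of `p₀(X)` and `Gₙ` for the empirical CDF of `p₀(X₁), …, p₀(Xₙ)`. Then
`Ĥₙ(s) - H(s) = s (Gₙ(s) - G(s))`, and every `F(Yᵢ|Xᵢ)` lies in `[0, 1]`, so the maximum is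
bounded by `sup_s |Gₙ(s) - G(s)|`, which tends to `0` almost surely by the Glivenko–Cantelli
theorem. The latter is proved the classical way: the strong law of large numbers gives a.s.
convergence of `Gₙ` and of its left limits at the quantiles of `G` of levels `j / k`, and between
two consecutive such quantiles monotonicity squeezes `Gₙ - G` up to an error `1 / k`.
-/

open MeasureTheory ProbabilityTheory Set Filter
open scoped ENNReal ProbabilityTheory Topology

namespace ProbabilityTheory

section Quantile

/-- Only meaningful for `0 < p`, where the set is bounded below, and when `p` is attained by
`cdf μ` (always the case for `p < 1`); otherwise `sInf` returns junk. -/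
noncomputable def quantile (μ : Measure ℝ) (p : ℝ) : ℝ := sInf {s | p ≤ cdf μ s}

variable {μ : Measure ℝ} {p s : ℝ}

lemma bddBelow_setOf_le_cdf (hp : 0 < p) : BddBelow {s | p ≤ cdf μ s} := by
  obtain ⟨b, hb⟩ := ((tendsto_cdf_atBot μ).eventually (gt_mem_nhds hp)).exists
  refine ⟨b, fun t ht => ?_⟩
  by_contra! htb
  exact (ht.trans ((cdf μ).mono htb.le)).not_gt hb

lemma quantile_le (hp : 0 < p) (hs : p ≤ cdf μ s) : quantile μ p ≤ s :=
  csInf_le (bddBelow_setOf_le_cdf hp) hs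

lemma le_cdf_quantile (hp : 0 < p) (hs : p ≤ cdf μ s) : p ≤ cdf μ (quantile μ p) := by
  rw [← (cdf μ).iInf_Ioi_eq]
  refine le_ciInf fun ⟨r, hr⟩ => ?_
  obtain ⟨t, ht, htr⟩ := (csInf_lt_iff (bddBelow_setOf_le_cdf hp) ⟨s, hs⟩).1 hr
  exact ht.trans ((cdf μ).mono htr.le)

lemma measureReal_Iio_eq_leftLim_cdf [IsProbabilityMeasure μ] (x : ℝ) :
    μ.real (Iio x) = Function.leftLim (cdf μ) x := by
  have h := (cdf μ).measure_Iio (tendsto_cdf_atBot μ) x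
  rw [measure_cdf, sub_zero] at h
  rw [measureReal_def, h, ENNReal.toReal_ofReal]
  exact (cdf_nonneg μ _).trans ((cdf μ).mono.le_leftLim (sub_one_lt x))

lemma measureReal_Iio_quantile_le [IsProbabilityMeasure μ] (hp : 0 < p) :
    μ.real (Iio (quantile μ p)) ≤ p := by
  rw [measureReal_Iio_eq_leftLim_cdf]
  refine le_of_tendsto ((cdf μ).mono.tendsto_leftLim _) ?_
  filter_upwards [self_mem_nhdsWithin] with t ht
  by_contra! h
  exact (quantile_le hp h.le).not_gt ht

variable {ν : Measure ℝ} [IsZeroOrProbabilityMeasure ν] {k : ℕ} {δ : ℝ}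

lemma cdf_sub_le_measureReal_Iic (hk : 0 < k)
    (hgrid : ∀ j ∈ Finset.Icc 1 k,
      |ν.real (Iic (quantile μ (j / k))) - cdf μ (quantile μ (j / k))| ≤ δ) (s : ℝ) :
    cdf μ s - (δ + 1 / k) ≤ ν.real (Iic s) := by
  have hkR : (0 : ℝ) < k := by exact_mod_cast hk
  have hδ : 0 ≤ δ := (abs_nonneg _).trans (hgrid 1 (by simp [Nat.one_le_iff_ne_zero, hk.ne']))
  set j := ⌊k * cdf μ s⌋₊
  have hj_gt : cdf μ s - 1 / k < j / k := by
    rw [sub_lt_iff_lt_add, ← add_div, lt_div_iff₀ hkR, mul_comm]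
    exact Nat.lt_floor_add_one _
  rcases Nat.eq_zero_or_pos j with hj0 | hj_pos
  · rw [hj0, Nat.cast_zero, zero_div] at hj_gt
    linarith [measureReal_nonneg (μ := ν) (s := Iic s)]
  have hp : (0 : ℝ) < j / k := by positivity
  have hjs : (j : ℝ) / k ≤ cdf μ s := by
    rw [div_le_iff₀ hkR, mul_comm]
    exact Nat.floor_le (mul_nonneg hkR.le (cdf_nonneg μ s))
  have hjk : j ≤ k :=
    Nat.floor_le_of_le (mul_le_of_le_one_right hkR.le (cdf_le_one μ s))
  have hmono : ν.real (Iic (quantile μ (j / k))) ≤ ν.real (Iic s) :=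
    measureReal_mono (Iic_subset_Iic.2 (quantile_le hp hjs))
  have hclose := (abs_le.1 (hgrid j (Finset.mem_Icc.2 ⟨hj_pos, hjk⟩))).1
  linarith [le_cdf_quantile hp hjs]

lemma measureReal_Iic_le_cdf_add [IsProbabilityMeasure μ] (hk : 0 < k)
    (hgrid : ∀ j ∈ Finset.Icc 1 k,
      |ν.real (Iio (quantile μ (j / k))) - μ.real (Iio (quantile μ (j / k)))| ≤ δ) (s : ℝ) :
    ν.real (Iic s) ≤ cdf μ s + (δ + 1 / k) := by
  have hkR : (0 : ℝ) < k := by exact_mod_cast hk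
  have hδ : 0 ≤ δ := (abs_nonneg _).trans (hgrid 1 (by simp [Nat.one_le_iff_ne_zero, hk.ne']))
  set j := ⌊k * cdf μ s⌋₊ + 1
  have hj_le : (j : ℝ) / k ≤ cdf μ s + 1 / k := by
    rw [div_le_iff₀ hkR, add_mul, one_div_mul_cancel hkR.ne', mul_comm]
    push_cast [j]
    linarith [Nat.floor_le (mul_nonneg hkR.le (cdf_nonneg μ s))]
  have hj_gt : cdf μ s < j / k := by
    rw [lt_div_iff₀ hkR, mul_comm]
    exact_mod_cast Nat.lt_floor_add_one _
  rcases le_or_gt k j with hkj | hjk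
  · have : (1 : ℝ) ≤ j / k := by rw [le_div_iff₀ hkR, one_mul]; exact_mod_cast hkj
    linarith [measureReal_le_one (μ := ν) (s := Iic s)]
  have hp : (0 : ℝ) < j / k := by positivity
  have hp1 : (j : ℝ) / k < 1 := by rw [div_lt_one hkR]; exact_mod_cast hjk
  obtain ⟨t, ht⟩ := ((tendsto_cdf_atTop μ).eventually (lt_mem_nhds hp1)).exists
  have hsq : s < quantile μ (j / k) := by
    by_contra! hqs
    exact (hj_gt.trans_le (le_cdf_quantile hp ht.le)).not_ge ((cdf μ).mono hqs)
  have hmono : ν.real (Iic s) ≤ ν.real (Iio (quantile μ (j / k))) :=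
    measureReal_mono (Iic_subset_Iio.2 hsq)
  have hclose := (abs_le.1 (hgrid j (Finset.mem_Icc.2 ⟨Nat.le_add_left 1 _, hjk.le⟩))).2
  linarith [measureReal_Iio_quantile_le (μ := μ) hp]

lemma abs_measureReal_Iic_sub_cdf_le [IsProbabilityMeasure μ] (hk : 0 < k)
    (hgrid : ∀ j ∈ Finset.Icc 1 k,
      |ν.real (Iic (quantile μ (j / k))) - μ.real (Iic (quantile μ (j / k)))| ≤ δ ∧
      |ν.real (Iio (quantile μ (j / k))) - μ.real (Iio (quantile μ (j / k)))| ≤ δ) (s : ℝ) :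
    |ν.real (Iic s) - cdf μ s| ≤ δ + 1 / k := by
  have hIic := cdf_sub_le_measureReal_Iic (ν := ν) hk
    (fun j hj => cdf_eq_real μ (quantile μ (j / k)) ▸ (hgrid j hj).1) s
  have hIio := measureReal_Iic_le_cdf_add (ν := ν) hk (fun j hj => (hgrid j hj).2) s
  exact abs_le.2 ⟨by linarith, by linarith⟩

theorem tendstoUniformly_cdf_of_tendsto_quantile {ι : Type*} {l : Filter ι}
    [IsProbabilityMeasure μ] {ν : ι → Measure ℝ} [∀ i, IsZeroOrProbabilityMeasure (ν i)]
    (h : ∀ k j : ℕ,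
      Tendsto (fun i => (ν i).real (Iic (quantile μ (j / k)))) l
        (𝓝 (μ.real (Iic (quantile μ (j / k))))) ∧
      Tendsto (fun i => (ν i).real (Iio (quantile μ (j / k)))) l
        (𝓝 (μ.real (Iio (quantile μ (j / k)))))) :
    TendstoUniformly (fun i s => (ν i).real (Iic s)) (cdf μ) l := by
  refine Metric.tendstoUniformly_iff.2 fun ε hε => ?_
  obtain ⟨k, hk⟩ := exists_nat_gt (2 / ε)
  have hkR : (0 : ℝ) < k := (by positivity : (0 : ℝ) < 2 / ε).trans hk
  have hk_inv : 1 / (k : ℝ) < ε / 2 := by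
    rw [div_lt_iff₀ hkR]; rw [div_lt_iff₀ hε] at hk; linarith
  have hclose {x : ι → ℝ} {a : ℝ} (hx : Tendsto x l (𝓝 a)) : ∀ᶠ i in l, |x i - a| ≤ ε / 2 :=
    (Metric.tendsto_nhds.1 hx _ (half_pos hε)).mono fun _ hi => hi.le
  have hgrid : ∀ᶠ i in l, ∀ j ∈ Finset.Icc 1 k,
      |(ν i).real (Iic (quantile μ (j / k))) - μ.real (Iic (quantile μ (j / k)))| ≤ ε / 2 ∧
      |(ν i).real (Iio (quantile μ (j / k))) - μ.real (Iio (quantile μ (j / k)))| ≤ ε / 2 :=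
    (Finset.eventually_all _).2 fun j _ => (hclose (h k j).1).and (hclose (h k j).2)
  filter_upwards [hgrid] with i hi s
  rw [dist_comm, Real.dist_eq]
  linarith [abs_measureReal_Iic_sub_cdf_le (by exact_mod_cast hkR) hi s]

end Quantile

section Empirical

variable {Ω E : Type*} [MeasurableSpace E]

noncomputable def empiricalMeasure (W : ℕ → Ω → E) (n : ℕ) (ω : Ω) : Measure E :=
  (n : ℝ≥0∞)⁻¹ • ∑ j ∈ Finset.range n, Measure.dirac (W j ω)

instance (W : ℕ → Ω → E) (n : ℕ) (ω : Ω) :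
    IsZeroOrProbabilityMeasure (empiricalMeasure W n ω) := by
  rw [isZeroOrProbabilityMeasure_iff]
  rcases eq_or_ne n 0 with rfl | hn
  · simp [empiricalMeasure]
  · right
    simp [empiricalMeasure, Measure.finsetSum_apply, ENNReal.inv_mul_cancel, hn]

lemma empiricalMeasure_real_apply (W : ℕ → Ω → E) (n : ℕ) (ω : Ω) {S : Set E}
    (hS : MeasurableSet S) :
    (empiricalMeasure W n ω).real S = (∑ j ∈ Finset.range n, S.indicator 1 (W j ω)) / n := by
  have hdirac : ∀ j, (Measure.dirac (W j ω) S).toReal = S.indicator 1 (W j ω) := fun j => by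
    rw [Measure.dirac_apply' _ hS]
    by_cases h : W j ω ∈ S <;> simp [h]
  rw [measureReal_def, empiricalMeasure, Measure.smul_apply, Measure.finsetSum_apply, smul_eq_mul,
    ENNReal.toReal_mul, ENNReal.toReal_inv, ENNReal.toReal_natCast,
    ENNReal.toReal_sum fun j _ => measure_ne_top _ _, inv_mul_eq_div]
  simp_rw [hdirac]

variable [MeasurableSpace Ω] {P : Measure Ω} [IsFiniteMeasure P]

theorem ae_tendsto_empiricalMeasure_real {W : ℕ → Ω → E} (hW : ∀ i, Measurable (W i))
    (hindep : Pairwise (Function.onFun (· ⟂ᵢ[P] ·) W)) {m : Measure E}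
    (hm : ∀ i, P.map (W i) = m) {S : Set E} (hS : MeasurableSet S) :
    ∀ᵐ ω ∂P, Tendsto (fun n => (empiricalMeasure W n ω).real S) atTop (𝓝 (m.real S)) := by
  have hf : Measurable (S.indicator (1 : E → ℝ)) := measurable_const.indicator hS
  have hslln := strong_law_ae_real (fun i ω => S.indicator 1 (W i ω))
    (((integrable_const 1).indicator hS).comp_measurable (hW 0))
    (fun i j hij => (hindep hij).comp hf hf)
    (fun i => (IdentDistrib.mk (hW i).aemeasurable (hW 0).aemeasurable (by rw [hm, hm])).comp hf)
  have hmean : P[fun ω => S.indicator 1 (W 0 ω)] = m.real S := by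
    rw [← hm 0, ← integral_map (hW 0).aemeasurable hf.aestronglyMeasurable]
    exact integral_indicator_one hS
  simpa only [empiricalMeasure_real_apply _ _ _ hS, hmean] using hslln

/-- The Glivenko–Cantelli theorem. -/
theorem ae_tendstoUniformly_empiricalMeasure_Iic {Z : ℕ → Ω → ℝ} (hZ : ∀ i, Measurable (Z i))
    (hindep : Pairwise (Function.onFun (· ⟂ᵢ[P] ·) Z)) {μ : Measure ℝ} [IsProbabilityMeasure μ]
    (hμ : ∀ i, P.map (Z i) = μ) :
    ∀ᵐ ω ∂P,
      TendstoUniformly (fun n s => (empiricalMeasure Z n ω).real (Iic s)) (cdf μ) atTop := by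
  have hlim (x : ℝ) := ae_tendsto_empiricalMeasure_real hZ hindep hμ (measurableSet_Iic (a := x))
  have hlim' (x : ℝ) := ae_tendsto_empiricalMeasure_real hZ hindep hμ (measurableSet_Iio (a := x))
  filter_upwards [ae_all_iff.2 fun k : ℕ => ae_all_iff.2 fun j : ℕ =>
    (hlim (quantile μ (j / k))).and (hlim' (quantile μ (j / k)))] with ω hω
  exact tendstoUniformly_cdf_of_tendsto_quantile hω

end Empirical

end ProbabilityTheory

lemma TendstoUniformly.tendstoUniformlyOn_Icc_mul {ι : Type*} {l : Filter ι}
    {f : ι → ℝ → ℝ} {g : ℝ → ℝ} (h : TendstoUniformly f g l) :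
    TendstoUniformlyOn (fun i s => s * f i s) (fun s => s * g s) l (Icc 0 1) := by
  refine Metric.tendstoUniformlyOn_iff.2 fun ε hε => ?_
  filter_upwards [Metric.tendstoUniformly_iff.1 h ε hε] with i hi s hs
  rw [Real.dist_eq, ← mul_sub, abs_mul, abs_of_nonneg hs.1, ← Real.dist_eq]
  exact (mul_le_of_le_one_left dist_nonneg hs.2).trans_lt (hi s)

lemma tendsto_iSup_fin_of_tendstoUniformlyOn {α : Type*} {f : ℕ → α → ℝ} {g : α → ℝ}
    {s : Set α} (h : TendstoUniformlyOn f g atTop s) {x : (n : ℕ) → Fin n → α}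
    (hx : ∀ n i, x n i ∈ s) :
    Tendsto (fun n => ⨆ i : Fin n, |f n (x n i) - g (x n i)|) atTop (𝓝 0) := by
  refine tendsto_order.2 ⟨fun a ha => Eventually.of_forall fun n =>
    ha.trans_le (Real.iSup_nonneg fun i => abs_nonneg _), fun a ha => ?_⟩
  filter_upwards [Metric.tendstoUniformlyOn_iff.1 h (a / 2) (half_pos ha)] with n hn
  refine (Real.iSup_le (fun i => ?_) (half_pos ha).le).trans_lt (half_lt_self ha)
  rw [abs_sub_comm, ← Real.dist_eq]
  exact (hn _ (hx n i)).le

theorem stmt8_general {d : ℕ} {Ω : Type*} [MeasurableSpace Ω] (P : Measure Ω)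
    [IsProbabilityMeasure P]
    (μX : Measure (Fin d → ℝ)) [IsProbabilityMeasure μX]
    (p₀ : (Fin d → ℝ) → ℝ) (hp₀ : Measurable p₀)
    (κ : Kernel (Fin d → ℝ) ℝ) [IsMarkovKernel κ]
    (F : ℝ → (Fin d → ℝ) → ℝ) (hF : ∀ y x, F y x = (κ x (Set.Iic y)).toReal)
    (XY : ℕ → Ω → (Fin d → ℝ) × ℝ) (hXYmeas : ∀ i, Measurable (XY i))
    (hindep : iIndepFun XY P)
    (hident : ∀ i, P.map (XY i) = μX ⊗ₘ κ)
    (H : ℝ → ℝ) (hH : ∀ s ∈ Set.Icc (0 : ℝ) 1,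
      H s = s * (μX {x | p₀ x ≤ s}).toReal)
    (Hhat : ℕ → Ω → ℝ → ℝ)
    (hHhat : ∀ n ω s, Hhat n ω s
      = (s / n) * ∑ j ∈ Finset.range n, (if p₀ ((XY j ω).1) ≤ s then (1 : ℝ) else 0)) :
    ∀ᵐ ω ∂P, Tendsto
      (fun n => ⨆ i : Fin n,
        |Hhat n ω (F ((XY i ω).2) ((XY i ω).1)) - H (F ((XY i ω).2) ((XY i ω).1))|)
      atTop (nhds 0) := by
  set Z : ℕ → Ω → ℝ := fun j ω => p₀ (XY j ω).1
  have hp₀fst : Measurable (p₀ ∘ Prod.fst (β := ℝ)) := hp₀.comp measurable_fst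
  have hZ : ∀ i, Measurable (Z i) := fun i => hp₀fst.comp (hXYmeas i)
  have hZindep : Pairwise (Function.onFun (· ⟂ᵢ[P] ·) Z) :=
    fun i j hij => (hindep.indepFun hij).comp hp₀fst hp₀fst
  have hZlaw : ∀ i, P.map (Z i) = μX.map p₀ := fun i => calc
    P.map (Z i) = ((P.map (XY i)).map Prod.fst).map p₀ := by
      rw [Measure.map_map hp₀ measurable_fst, Measure.map_map hp₀fst (hXYmeas i)]
      rfl
    _ = μX.map p₀ := by rw [hident, ← Measure.fst, Measure.fst_compProd]
  have : IsProbabilityMeasure (μX.map p₀) := Measure.isProbabilityMeasure_map hp₀.aemeasurable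
  have hHcdf : ∀ s ∈ Icc (0 : ℝ) 1, H s = s * cdf (μX.map p₀) s := fun s hs => by
    rw [hH s hs, cdf_eq_real, measureReal_def, Measure.map_apply hp₀ measurableSet_Iic]
    rfl
  have hHhat_eq : ∀ n ω s, Hhat n ω s = s * (empiricalMeasure Z n ω).real (Iic s) := by
    intro n ω s
    rw [hHhat, empiricalMeasure_real_apply _ _ _ measurableSet_Iic, mul_div_assoc',
      div_mul_eq_mul_div]
    simp [indicator_apply, Z]
  have hFmem : ∀ y x, F y x ∈ Icc (0 : ℝ) 1 := fun y x => by
    rw [hF]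
    exact ⟨ENNReal.toReal_nonneg, measureReal_le_one⟩
  filter_upwards [ae_tendstoUniformly_empiricalMeasure_Iic hZ hZindep hZlaw] with ω hω
  refine tendsto_iSup_fin_of_tendstoUniformlyOn ?_ fun n i => hFmem _ _
  exact (hω.tendstoUniformlyOn_Icc_mul.congr
    (Eventually.of_forall fun n s _ => (hHhat_eq n ω s).symm)).congr_right
    fun s hs => (hHcdf s hs).symm

/-- Semicontinuous regression setup with i.i.d. observations
`(X₁,Y₁), (X₂,Y₂), …` with joint law `μ_X ⊗ κ`, where
`κ(x) = p₀(x)·δ₀ + (1-p₀(x))·ν_x`, `F(y|x) = κ(x)((-∞,y])`,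
`H(s) = s·Pr(p₀(X) ≤ s)` and `Ĥ_n(s) = (s/n)·Σ_{j=1}^n 1{p₀(X_j) ≤ s}`.
Then almost surely `max_{1 ≤ i ≤ n} |Ĥ_n(F(Y_i|X_i)) − H(F(Y_i|X_i))| → 0`
as `n → ∞`. -/
theorem stmt8 {d : ℕ} {Ω : Type*} [MeasurableSpace Ω] (P : Measure Ω)
    [IsProbabilityMeasure P]
    (μX : Measure (Fin d → ℝ)) [IsProbabilityMeasure μX]
    (p₀ : (Fin d → ℝ) → ℝ) (hp₀ : Measurable p₀)
    (hp₀mem : ∀ x, p₀ x ∈ Set.Ioo (0 : ℝ) 1)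
    (ν : (Fin d → ℝ) → Measure ℝ) (hν : ∀ x, IsProbabilityMeasure (ν x))
    (hν0 : ∀ x, ν x (Set.Iic 0) = 0) (hνatom : ∀ x, NoAtoms (ν x))
    (κ : Kernel (Fin d → ℝ) ℝ) [IsMarkovKernel κ]
    (hκ : ∀ x, κ x = ENNReal.ofReal (p₀ x) • Measure.dirac 0
        + ENNReal.ofReal (1 - p₀ x) • ν x)
    (F : ℝ → (Fin d → ℝ) → ℝ) (hF : ∀ y x, F y x = (κ x (Set.Iic y)).toReal)
    (XY : ℕ → Ω → (Fin d → ℝ) × ℝ) (hXYmeas : ∀ i, Measurable (XY i))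
    (hindep : iIndepFun XY P)
    (hident : ∀ i, P.map (XY i) = μX ⊗ₘ κ)
    (H : ℝ → ℝ) (hH : ∀ s ∈ Set.Icc (0 : ℝ) 1,
      H s = s * (μX {x | p₀ x ≤ s}).toReal)
    (Hhat : ℕ → Ω → ℝ → ℝ)
    (hHhat : ∀ n ω s, Hhat n ω s
      = (s / n) * ∑ j ∈ Finset.range n, (if p₀ ((XY j ω).1) ≤ s then (1 : ℝ) else 0)) :
    ∀ᵐ ω ∂P, Tendsto
      (fun n => ⨆ i : Fin n,
        |Hhat n ω (F ((XY i ω).2) ((XY i ω).1)) - H (F ((XY i ω).2) ((XY i ω).1))|)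
      atTop (nhds 0) :=
  stmt8_general P μX p₀ hp₀ κ F hF XY hXYmeas hindep hident H hH Hhat hHhat
end

section
/- Let Z and W be real-valued random variables on the same probability space with |Z − W| ≤ δ almost surely, and suppose the laws of Z and of W each have a Lebesgue density bounded by M. Then for all a, b ∈ [0,1], E|a·1{Z ≤ a} − b·1{W ≤ b}| ≤ 2Mδ + (1 + M)·|a − b|. (This is the core estimate in the proof of Lemma A.2.) -/
/-!
With `A = {Z ≤ a}` and `B = {W ≤ b}`, write `a·1_A − b·1_B = (a − b)·1_A + b·(1_A − 1_B)`;
since `|b| ≤ 1`, the expectation is at most `|a − b| + ℙ(A ∆ B)`. On `A \ B` the coupling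
`|Z − W| ≤ δ` traps `W` in `(b, a + δ]`, which has probability at most `M·(a + δ − b)⁺` because
the density of `W` is bounded by `M`; symmetrically for `B \ A` with the roles of `Z` and `W`
exchanged, and `(a + δ − b)⁺ + (b + δ − a)⁺ ≤ 2δ + |a − b|`.
-/

open MeasureTheory Set
open scoped ENNReal symmDiff

lemma measure_preimage_le_of_density_le {α Ω : Type*} [MeasurableSpace α] [MeasurableSpace Ω]
    {μ : Measure α} {P : Measure Ω} {X : Ω → α} (hX : AEMeasurable X P) {f : α → ℝ≥0∞}
    (hlaw : P.map X = μ.withDensity f) {C : ℝ≥0∞} (hf : ∀ᵐ t ∂μ, f t ≤ C)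
    {s : Set α} (hs : MeasurableSet s) :
    P (X ⁻¹' s) ≤ C * μ s := by
  rw [← Measure.map_apply_of_aemeasurable hX hs, hlaw, withDensity_apply _ hs,
    ← setLIntegral_const]
  exact lintegral_mono_ae (ae_restrict_of_ae hf)

lemma measureReal_le_lt_le_of_abs_sub_le {Ω : Type*} [MeasurableSpace Ω] {P : Measure Ω}
    [IsFiniteMeasure P] {X Y : Ω → ℝ} (hY : AEMeasurable Y P) {δ : ℝ}
    (hclose : ∀ᵐ ω ∂P, |X ω - Y ω| ≤ δ) {f : ℝ → ℝ≥0∞}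
    (hlaw : P.map Y = volume.withDensity f) {M : ℝ} (hM : 0 ≤ M)
    (hf : ∀ᵐ t ∂volume, f t ≤ ENNReal.ofReal M) (a b : ℝ) :
    P.real {ω | X ω ≤ a ∧ b < Y ω} ≤ M * max (a + δ - b) 0 := by
  have hsub : {ω | X ω ≤ a ∧ b < Y ω} ≤ᵐ[P] Y ⁻¹' Ioc b (a + δ) := by
    filter_upwards [hclose] with ω hω ⟨hXa, hbY⟩
    exact ⟨hbY, by linarith [(abs_le.mp hω).1]⟩
  have hle := (measure_mono_ae hsub).trans
    (measure_preimage_le_of_density_le hY hlaw hf measurableSet_Ioc)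
  rw [Real.volume_Ioc] at hle
  calc P.real {ω | X ω ≤ a ∧ b < Y ω}
      ≤ (ENNReal.ofReal M * ENNReal.ofReal (a + δ - b)).toReal :=
        ENNReal.toReal_mono (by finiteness) hle
    _ = M * max (a + δ - b) 0 := by
        rw [ENNReal.toReal_mul, ENNReal.toReal_ofReal hM, ENNReal.toReal_ofReal']

lemma integral_abs_mul_indicator_sub_le {Ω : Type*} [MeasurableSpace Ω] (P : Measure Ω)
    [IsProbabilityMeasure P] {A B : Set Ω} (hA : MeasurableSet A) (hB : MeasurableSet B)
    (a : ℝ) {b : ℝ} (hb : |b| ≤ 1) :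
    ∫ ω, |a * A.indicator 1 ω - b * B.indicator 1 ω| ∂P ≤ |a - b| + P.real (A ∆ B) := by
  have hpoint : ∀ ω, |a * A.indicator 1 ω - b * B.indicator 1 ω|
      ≤ |a - b| + (A ∆ B).indicator 1 ω := by
    intro ω
    have hx : |A.indicator (1 : Ω → ℝ) ω| ≤ 1 := by
      by_cases h : ω ∈ A <;> simp [h]
    have hxy : |A.indicator (1 : Ω → ℝ) ω - B.indicator 1 ω| = (A ∆ B).indicator 1 ω := by
      rw [← abs_indicator_symmDiff]
      exact abs_of_nonneg (indicator_nonneg (fun _ _ => zero_le_one) ω)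
    calc |a * A.indicator 1 ω - b * B.indicator 1 ω|
        = |(a - b) * A.indicator 1 ω + b * (A.indicator 1 ω - B.indicator 1 ω)| := by
          congr 1; ring
      _ ≤ |a - b| * |A.indicator (1 : Ω → ℝ) ω| + |b| * (A ∆ B).indicator 1 ω := by
          rw [← hxy, ← abs_mul, ← abs_mul]; exact abs_add_le _ _
      _ ≤ |a - b| + (A ∆ B).indicator 1 ω := by
          gcongr
          · exact mul_le_of_le_one_right (abs_nonneg _) hx
          · exact mul_le_of_le_one_left (indicator_nonneg (fun _ _ => zero_le_one) ω) hb
  have hAB : MeasurableSet (A ∆ B) := hA.symmDiff hB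
  calc ∫ ω, |a * A.indicator 1 ω - b * B.indicator 1 ω| ∂P
      ≤ ∫ ω, (|a - b| + (A ∆ B).indicator 1 ω) ∂P :=
        integral_mono_of_nonneg (ae_of_all _ fun _ => abs_nonneg _)
          ((integrable_const _).add ((integrable_const 1).indicator hAB))
          (ae_of_all _ hpoint)
    _ = |a - b| + P.real (A ∆ B) := by
        rw [integral_add (integrable_const _) ((integrable_const 1).indicator hAB),
          integral_const, integral_indicator_one hAB, probReal_univ, one_smul]

theorem stmt11_general {Ω : Type*} [MeasurableSpace Ω] (P : Measure Ω) [IsProbabilityMeasure P]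
    (Z W : Ω → ℝ) (hZ : Measurable Z) (hW : Measurable W)
    (δ M : ℝ) (hδ : 0 ≤ δ) (hM : 0 ≤ M)
    (hclose : ∀ᵐ ω ∂P, |Z ω - W ω| ≤ δ)
    (fZ fW : ℝ → ℝ≥0∞)
    (hlawZ : P.map Z = volume.withDensity fZ)
    (hlawW : P.map W = volume.withDensity fW)
    (hboundZ : ∀ᵐ t ∂(volume : Measure ℝ), fZ t ≤ ENNReal.ofReal M)
    (hboundW : ∀ᵐ t ∂(volume : Measure ℝ), fW t ≤ ENNReal.ofReal M)
    (a b : ℝ) (hb : b ∈ Set.Icc (0 : ℝ) 1) :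
    ∫ ω, |a * (if Z ω ≤ a then (1 : ℝ) else 0) - b * (if W ω ≤ b then (1 : ℝ) else 0)| ∂P
      ≤ 2 * M * δ + (1 + M) * |a - b| := by
  have hb' : |b| ≤ 1 := abs_le.mpr ⟨by linarith [hb.1], hb.2⟩
  have hclose' : ∀ᵐ ω ∂P, |W ω - Z ω| ≤ δ := hclose.mono fun ω h => by rwa [abs_sub_comm]
  have hsymm : {ω | Z ω ≤ a} ∆ {ω | W ω ≤ b}
      = {ω | Z ω ≤ a ∧ b < W ω} ∪ {ω | W ω ≤ b ∧ a < Z ω} := by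
    ext ω; simp [mem_symmDiff, not_le]
  calc ∫ ω, |a * (if Z ω ≤ a then (1 : ℝ) else 0) - b * (if W ω ≤ b then (1 : ℝ) else 0)| ∂P
      = ∫ ω, |a * {ω | Z ω ≤ a}.indicator 1 ω - b * {ω | W ω ≤ b}.indicator 1 ω| ∂P := by
        simp only [indicator_apply, mem_ofPred_eq, Pi.one_apply]
    _ ≤ |a - b| + P.real ({ω | Z ω ≤ a} ∆ {ω | W ω ≤ b}) :=
        integral_abs_mul_indicator_sub_le P (measurableSet_le hZ measurable_const)
          (measurableSet_le hW measurable_const) a hb'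
    _ ≤ |a - b| + (M * max (a + δ - b) 0 + M * max (b + δ - a) 0) := by
        rw [hsymm]
        gcongr
        refine (measureReal_union_le _ _).trans (add_le_add ?_ ?_)
        · exact measureReal_le_lt_le_of_abs_sub_le hW.aemeasurable hclose hlawW hM hboundW a b
        · exact measureReal_le_lt_le_of_abs_sub_le hZ.aemeasurable hclose' hlawZ hM hboundZ b a
    _ ≤ 2 * M * δ + (1 + M) * |a - b| := by
        have hmax : max (a + δ - b) 0 + max (b + δ - a) 0 ≤ 2 * δ + |a - b| := by
          rw [max_def, max_def]
          split_ifs <;> rcases abs_cases (a - b) with ⟨_, _⟩ | ⟨_, _⟩ <;> linarith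
        nlinarith [mul_le_mul_of_nonneg_left hmax hM]

/-- If `|Z − W| ≤ δ` almost surely and the laws of `Z` and `W` each have a
Lebesgue density bounded by `M`, then for all `a, b ∈ [0,1]`,
`E|a·1{Z ≤ a} − b·1{W ≤ b}| ≤ 2Mδ + (1 + M)·|a − b|`. -/
theorem stmt11 {Ω : Type*} [MeasurableSpace Ω] (P : Measure Ω) [IsProbabilityMeasure P]
    (Z W : Ω → ℝ) (hZ : Measurable Z) (hW : Measurable W)
    (δ M : ℝ) (hδ : 0 ≤ δ) (hM : 0 ≤ M)
    (hclose : ∀ᵐ ω ∂P, |Z ω - W ω| ≤ δ)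
    (fZ fW : ℝ → ℝ≥0∞) (hfZ : Measurable fZ) (hfW : Measurable fW)
    (hlawZ : P.map Z = volume.withDensity fZ)
    (hlawW : P.map W = volume.withDensity fW)
    (hboundZ : ∀ᵐ t ∂(volume : Measure ℝ), fZ t ≤ ENNReal.ofReal M)
    (hboundW : ∀ᵐ t ∂(volume : Measure ℝ), fW t ≤ ENNReal.ofReal M)
    (a b : ℝ) (ha : a ∈ Set.Icc (0 : ℝ) 1) (hb : b ∈ Set.Icc (0 : ℝ) 1) :
    ∫ ω, |a * (if Z ω ≤ a then (1 : ℝ) else 0) - b * (if W ω ≤ b then (1 : ℝ) else 0)| ∂P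
      ≤ 2 * M * δ + (1 + M) * |a - b| :=
  stmt11_general P Z W hZ hW δ M hδ hM hclose fZ fW hlawZ hlawW hboundZ hboundW a b hb
end

section
/- Lemma A.2 (quantitative form): Let X̃ be a random vector in ℝ^d. Let β, β′ be elements of a normed space, let p_β, p_{β′} : ℝ^d → ℝ satisfy |p_β(x) − p_{β′}(x)| ≤ α‖β − β′‖ for all x, let a_β, a_{β′} ∈ [0,1] satisfy |a_β − a_{β′}| ≤ α‖β − β′‖, and suppose the laws of p_β(X̃) and of p_{β′}(X̃) each have a Lebesgue density bounded by M. Then E[(a_β·1{p_β(X̃) ≤ a_β} − a_{β′}·1{p_{β′}(X̃) ≤ a_{β′}})²] ≤ (3M + 1)·α·‖β − β′‖. -/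
/-!
Write `ε = α‖β - β'‖`. The integrand is at most `(a_β - a_{β'})² ≤ ε` where the two indicators
agree and at most `1 + ε` elsewhere. Disagreement forces `p_{β'}(X̃) ∈ (a_{β'}, a_β + ε]` or
`p_β(X̃) ∈ (a_β, a_{β'} + ε]`; these intervals have total length `2ε`, so by the density bound
disagreement has probability at most `2Mε`.
-/

open MeasureTheory Set
open scoped ENNReal

lemma sq_mul_ite_sub_mul_ite_le {a a' : ℝ} (ha : a ∈ Icc (0 : ℝ) 1) (ha' : a' ∈ Icc (0 : ℝ) 1)
    (p q : Prop) [Decidable p] [Decidable q] :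
    (a * (if p then (1 : ℝ) else 0) - a' * (if q then (1 : ℝ) else 0)) ^ 2
      ≤ (if p ↔ q then 0 else 1) + |a - a'| := by
  obtain ⟨ha0, ha1⟩ := ha
  obtain ⟨ha0', ha1'⟩ := ha'
  have hsq : (a - a') ^ 2 ≤ |a - a'| := by
    have : |a - a'| ≤ 1 := abs_le.mpr ⟨by linarith, by linarith⟩
    nlinarith [sq_abs (a - a'), abs_nonneg (a - a')]
  by_cases hp : p <;> by_cases hq : q <;> simp [hp, hq] <;> nlinarith [abs_nonneg (a - a')]

lemma measure_preimage_Ioc_le_of_density_le {Ω : Type*} [MeasurableSpace Ω] {P : Measure Ω}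
    {Y : Ω → ℝ} (hY : AEMeasurable Y P) {f : ℝ → ℝ≥0∞} (hlaw : P.map Y = volume.withDensity f)
    {M : ℝ} (hf : ∀ᵐ t ∂(volume : Measure ℝ), f t ≤ ENNReal.ofReal M) (a b : ℝ) :
    P (Y ⁻¹' Ioc a b) ≤ ENNReal.ofReal M * ENNReal.ofReal (b - a) :=
  calc P (Y ⁻¹' Ioc a b) ≤ P.map Y (Ioc a b) := Measure.le_map_apply hY _
    _ = ∫⁻ t in Ioc a b, f t := by rw [hlaw, withDensity_apply _ measurableSet_Ioc]
    _ ≤ ∫⁻ _ in Ioc a b, ENNReal.ofReal M := lintegral_mono_ae (ae_restrict_of_ae hf)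
    _ = ENNReal.ofReal M * ENNReal.ofReal (b - a) := by
      rw [setLIntegral_const, Real.volume_Ioc]

lemma measureReal_threshold_disagreement_le {Ω : Type*} [MeasurableSpace Ω] {P : Measure Ω}
    {Y Y' : Ω → ℝ} (hY : AEMeasurable Y P) (hY' : AEMeasurable Y' P)
    {f f' : ℝ → ℝ≥0∞} (hlaw : P.map Y = volume.withDensity f)
    (hlaw' : P.map Y' = volume.withDensity f') {M : ℝ} (hM : 0 ≤ M)
    (hf : ∀ᵐ t ∂(volume : Measure ℝ), f t ≤ ENNReal.ofReal M)
    (hf' : ∀ᵐ t ∂(volume : Measure ℝ), f' t ≤ ENNReal.ofReal M)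
    {ε : ℝ} (hYY' : ∀ ω, |Y ω - Y' ω| ≤ ε) {a a' : ℝ} (haa' : |a - a'| ≤ ε) :
    P.real {ω | ¬(Y ω ≤ a ↔ Y' ω ≤ a')} ≤ 2 * M * ε := by
  have haa'' := abs_le.mp haa'
  have hsub : {ω | ¬(Y ω ≤ a ↔ Y' ω ≤ a')} ⊆ Y' ⁻¹' Ioc a' (a + ε) ∪ Y ⁻¹' Ioc a (a' + ε) := by
    intro ω hω
    have hclose := abs_le.mp (hYY' ω)
    by_cases h : Y ω ≤ a
    · have h' : ¬Y' ω ≤ a' := fun h' => hω (iff_of_true h h')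
      exact .inl ⟨lt_of_not_ge h', by linarith⟩
    · have h' : Y' ω ≤ a' := by_contra fun h' => hω (iff_of_false h h')
      exact .inr ⟨lt_of_not_ge h, by linarith⟩
  have hP : P {ω | ¬(Y ω ≤ a ↔ Y' ω ≤ a')} ≤ ENNReal.ofReal (2 * M * ε) :=
    calc P {ω | ¬(Y ω ≤ a ↔ Y' ω ≤ a')}
        ≤ P (Y' ⁻¹' Ioc a' (a + ε)) + P (Y ⁻¹' Ioc a (a' + ε)) :=
          (measure_mono hsub).trans (measure_union_le _ _)
      _ ≤ ENNReal.ofReal M * ENNReal.ofReal (a + ε - a')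
            + ENNReal.ofReal M * ENNReal.ofReal (a' + ε - a) :=
          add_le_add (measure_preimage_Ioc_le_of_density_le hY' hlaw' hf' _ _)
            (measure_preimage_Ioc_le_of_density_le hY hlaw hf _ _)
      _ = ENNReal.ofReal (2 * M * ε) := by
          rw [← mul_add, ← ENNReal.ofReal_add (by linarith) (by linarith),
            ← ENNReal.ofReal_mul hM]
          ring_nf
  have hε : 0 ≤ ε := (abs_nonneg _).trans haa'
  exact ENNReal.toReal_le_of_le_ofReal (by positivity) hP

theorem stmt12_general {Ω : Type*} [MeasurableSpace Ω] (P : Measure Ω) [IsProbabilityMeasure P]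
    {d : ℕ} (Xt : Ω → (Fin d → ℝ)) (hXt : Measurable Xt)
    {E : Type*} [NormedAddCommGroup E] (β β' : E)
    (α M : ℝ) (hM : 0 ≤ M)
    (pβ pβ' : (Fin d → ℝ) → ℝ) (hpβ : Measurable pβ) (hpβ' : Measurable pβ')
    (hpLip : ∀ x, |pβ x - pβ' x| ≤ α * ‖β - β'‖)
    (aβ aβ' : ℝ) (haβ : aβ ∈ Set.Icc (0 : ℝ) 1) (haβ' : aβ' ∈ Set.Icc (0 : ℝ) 1)
    (haLip : |aβ - aβ'| ≤ α * ‖β - β'‖)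
    (fβ fβ' : ℝ → ℝ≥0∞)
    (hlawβ : P.map (fun ω => pβ (Xt ω)) = volume.withDensity fβ)
    (hlawβ' : P.map (fun ω => pβ' (Xt ω)) = volume.withDensity fβ')
    (hboundβ : ∀ᵐ t ∂(volume : Measure ℝ), fβ t ≤ ENNReal.ofReal M)
    (hboundβ' : ∀ᵐ t ∂(volume : Measure ℝ), fβ' t ≤ ENNReal.ofReal M) :
    ∫ ω, (aβ * (if pβ (Xt ω) ≤ aβ then (1 : ℝ) else 0)
        - aβ' * (if pβ' (Xt ω) ≤ aβ' then (1 : ℝ) else 0)) ^ 2 ∂P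
      ≤ (3 * M + 1) * α * ‖β - β'‖ := by
  set ε := α * ‖β - β'‖
  set D := {ω | ¬(pβ (Xt ω) ≤ aβ ↔ pβ' (Xt ω) ≤ aβ')}
  have hY := hpβ.comp hXt
  have hY' := hpβ'.comp hXt
  have hD : MeasurableSet D :=
    ((measurableSet_le hY measurable_const).mem.iff
      (measurableSet_le hY' measurable_const).mem).not.setOf
  have hPD : P.real D ≤ 2 * M * ε :=
    measureReal_threshold_disagreement_le hY.aemeasurable hY'.aemeasurable hlawβ hlawβ' hM
      hboundβ hboundβ' (fun ω => hpLip (Xt ω)) haLip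
  have hε : 0 ≤ ε := (abs_nonneg _).trans haLip
  calc _ ≤ ∫ ω, (D.indicator (fun _ => 1) ω + ε) ∂P := by
        refine integral_mono_of_nonneg (ae_of_all _ fun _ => sq_nonneg _)
          (((integrable_const 1).indicator hD).add (integrable_const ε)) (ae_of_all _ fun ω => ?_)
        refine (sq_mul_ite_sub_mul_ite_le haβ haβ' _ _).trans (add_le_add ?_ haLip)
        by_cases h : pβ (Xt ω) ≤ aβ ↔ pβ' (Xt ω) ≤ aβ' <;> simp [D, h]
    _ = P.real D + ε := by
        rw [integral_add ((integrable_const 1).indicator hD) (integrable_const ε),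
          integral_indicator_const _ hD, integral_const, probReal_univ, smul_eq_mul,
          smul_eq_mul, mul_one, one_mul]
    _ ≤ (3 * M + 1) * ε := by nlinarith
    _ = (3 * M + 1) * α * ‖β - β'‖ := by ring

/-- Lemma A.2, quantitative form: Let `X̃` be a random vector in `ℝ^d`,
`β, β′` elements of a normed space, `p_β, p_{β′} : ℝ^d → ℝ` with
`|p_β(x) − p_{β′}(x)| ≤ α‖β − β′‖` for all `x`, `a_β, a_{β′} ∈ [0,1]` with
`|a_β − a_{β′}| ≤ α‖β − β′‖`, and suppose the laws of `p_β(X̃)` and `p_{β′}(X̃)` each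
have a Lebesgue density bounded by `M`.  Then
`E[(a_β·1{p_β(X̃) ≤ a_β} − a_{β′}·1{p_{β′}(X̃) ≤ a_{β′}})²] ≤ (3M + 1)·α·‖β − β′‖`. -/
theorem stmt12 {Ω : Type*} [MeasurableSpace Ω] (P : Measure Ω) [IsProbabilityMeasure P]
    {d : ℕ} (Xt : Ω → (Fin d → ℝ)) (hXt : Measurable Xt)
    {E : Type*} [NormedAddCommGroup E] (β β' : E)
    (α M : ℝ) (hα : 0 ≤ α) (hM : 0 ≤ M)
    (pβ pβ' : (Fin d → ℝ) → ℝ) (hpβ : Measurable pβ) (hpβ' : Measurable pβ')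
    (hpLip : ∀ x, |pβ x - pβ' x| ≤ α * ‖β - β'‖)
    (aβ aβ' : ℝ) (haβ : aβ ∈ Set.Icc (0 : ℝ) 1) (haβ' : aβ' ∈ Set.Icc (0 : ℝ) 1)
    (haLip : |aβ - aβ'| ≤ α * ‖β - β'‖)
    (fβ fβ' : ℝ → ℝ≥0∞) (hfβ : Measurable fβ) (hfβ' : Measurable fβ')
    (hlawβ : P.map (fun ω => pβ (Xt ω)) = volume.withDensity fβ)
    (hlawβ' : P.map (fun ω => pβ' (Xt ω)) = volume.withDensity fβ')
    (hboundβ : ∀ᵐ t ∂(volume : Measure ℝ), fβ t ≤ ENNReal.ofReal M)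
    (hboundβ' : ∀ᵐ t ∂(volume : Measure ℝ), fβ' t ≤ ENNReal.ofReal M) :
    ∫ ω, (aβ * (if pβ (Xt ω) ≤ aβ then (1 : ℝ) else 0)
        - aβ' * (if pβ' (Xt ω) ≤ aβ' then (1 : ℝ) else 0)) ^ 2 ∂P
      ≤ (3 * M + 1) * α * ‖β - β'‖ :=
  stmt12_general P Xt hXt β β' α M hM pβ pβ' hpβ hpβ' hpLip aβ aβ' haβ haβ' haLip fβ fβ' hlawβ
    hlawβ' hboundβ hboundβ'
end

section
/- Lemma A.2 (limit form): In the setting of the parametrized family, suppose for every β in the parameter set B the functions satisfy the Lipschitz bounds |p₀(x,β) − p₀(x,β′)| ≤ α‖β − β′‖ and |F(y|x,β) − F(y|x,β′)| ≤ α‖β − β′‖ with F(y|x,β) ∈ [0,1], and the law of p₀(X̃,β) has a Lebesgue density bounded by M for each β. Let β̂_n be B-valued random variables converging in probability to β₀. Then for each fixed (x,y), the random sequence e_n = E_{X̃}[(F(y|x,β₀)·1{p₀(X̃,β₀) ≤ F(y|x,β₀)} − F(y|x,β̂_n)·1{p₀(X̃,β̂_n) ≤ F(y|x,β̂_n)})²]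 (the expectation taken over an independent copy X̃ of the covariate vector) converges to 0 in probability. -/
open MeasureTheory Set Filter
open scoped ENNReal Topology

/-!
Off the band where `p₀(x, β₀)` lies within `2α‖β - β₀‖` of `F(y|x, β₀)`, the indicators
`1{p₀ ≤ F}` at `β` and `β₀` agree, so the squared difference is at most `α‖β - β₀‖`.
The density bound gives the band probability at most `4Mα‖β - β₀‖`, so the error is
`O(‖β - β₀‖)`, hence continuous at `β₀`, and continuous images preserve convergence in
probability to a constant.
-/

theorem MeasureTheory.TendstoInMeasure.comp_continuousWithinAt {α ι E F : Type*} {m : MeasurableSpace α}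
    {μ : Measure α} [PseudoMetricSpace E] [PseudoMetricSpace F] {f : ι → α → E} {l : Filter ι}
    {s : Set E} {b : E} {Φ : E → F} (hΦ : ContinuousWithinAt Φ s b) (hs : ∀ i x, f i x ∈ s)
    (hf : TendstoInMeasure μ f l fun _ => b) :
    TendstoInMeasure μ (fun i x => Φ (f i x)) l fun _ => Φ b := by
  rw [tendstoInMeasure_iff_dist] at hf ⊢
  intro ε hε
  obtain ⟨δ, hδ, hΦδ⟩ := Metric.continuousWithinAt_iff.1 hΦ ε hε
  refine tendsto_of_tendsto_of_tendsto_of_le_of_le tendsto_const_nhds (hf δ hδ)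
    (fun _ => zero_le) fun i => measure_mono fun x hx => ?_
  by_contra hlt
  exact (not_le.2 (hΦδ (hs i x) (not_le.1 hlt))) hx

theorem measure_preimage_le_mul_volume_of_density_le {α : Type*} {m : MeasurableSpace α}
    {μ : Measure α} {X : α → ℝ} (hX : Measurable X) {f : ℝ → ℝ≥0∞} {c : ℝ≥0∞}
    (hmap : μ.map X = volume.withDensity f) (hf : ∀ᵐ t, f t ≤ c) {S : Set ℝ}
    (hS : MeasurableSet S) : μ (X ⁻¹' S) ≤ c * volume S := by
  rw [← Measure.map_apply hX hS, hmap, withDensity_apply _ hS, ← setLIntegral_const]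
  exact lintegral_mono_ae (ae_restrict_of_ae hf)

theorem sq_sub_mul_ite_le {a a' p p' η : ℝ} (ha : a ∈ Icc (0 : ℝ) 1) (ha' : a' ∈ Icc (0 : ℝ) 1)
    (haa' : |a - a'| ≤ η) (hpp' : |p - p'| ≤ η) :
    (a * (if p ≤ a then (1 : ℝ) else 0) - a' * (if p' ≤ a' then (1 : ℝ) else 0)) ^ 2
      ≤ η + (Icc (a - 2 * η) (a + 2 * η)).indicator 1 p := by
  obtain ⟨ha0, ha1⟩ := ha
  obtain ⟨ha'0, ha'1⟩ := ha'
  obtain ⟨haa'₁, haa'₂⟩ := abs_le.1 haa'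
  obtain ⟨hpp'₁, hpp'₂⟩ := abs_le.1 hpp'
  have hind : 0 ≤ (Icc (a - 2 * η) (a + 2 * η)).indicator (1 : ℝ → ℝ) p :=
    indicator_nonneg (fun _ _ => zero_le_one) p
  have hband : p ∈ Icc (a - 2 * η) (a + 2 * η) →
      (Icc (a - 2 * η) (a + 2 * η)).indicator (1 : ℝ → ℝ) p = 1 :=
    fun h => indicator_of_mem h _
  split_ifs with h h' h'
  · nlinarith
  · rw [hband ⟨by linarith, by linarith⟩]; nlinarith
  · rw [hband ⟨by linarith, by linarith⟩]; nlinarith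
  · linarith

theorem integral_sq_sub_mul_ite_le {X : Type*} [MeasurableSpace X] {μ : Measure X}
    [IsProbabilityMeasure μ] {u v : X → ℝ} (hu : Measurable u) {a a' η M : ℝ} (hM : 0 ≤ M)
    (ha : a ∈ Icc (0 : ℝ) 1) (ha' : a' ∈ Icc (0 : ℝ) 1) (haa' : |a - a'| ≤ η)
    (huv : ∀ x, |u x - v x| ≤ η) {f : ℝ → ℝ≥0∞} (hmap : μ.map u = volume.withDensity f)
    (hf : ∀ᵐ t, f t ≤ ENNReal.ofReal M) :
    ∫ x, (a * (if u x ≤ a then (1 : ℝ) else 0) - a' * (if v x ≤ a' then (1 : ℝ) else 0)) ^ 2 ∂μ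
      ≤ (1 + 4 * M) * η := by
  have hη : 0 ≤ η := (abs_nonneg _).trans haa'
  set band := Icc (a - 2 * η) (a + 2 * η)
  have hband : MeasurableSet (u ⁻¹' band) := hu measurableSet_Icc
  have hband_le : μ.real (u ⁻¹' band) ≤ M * (4 * η) := by
    refine ENNReal.toReal_le_of_le_ofReal (by positivity) ?_
    calc μ (u ⁻¹' band) ≤ ENNReal.ofReal M * volume band :=
          measure_preimage_le_mul_volume_of_density_le hu hmap hf measurableSet_Icc
      _ = ENNReal.ofReal (M * (4 * η)) := by
          rw [Real.volume_Icc, ← ENNReal.ofReal_mul hM]; ring_nf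
  have hint : Integrable (fun x => η + (u ⁻¹' band).indicator 1 x) μ :=
    (integrable_const _).add ((integrable_const 1).indicator hband)
  calc _ ≤ ∫ x, (η + (u ⁻¹' band).indicator 1 x) ∂μ :=
        integral_mono_of_nonneg (.of_forall fun _ => sq_nonneg _) hint
          (.of_forall fun x => sq_sub_mul_ite_le ha ha' haa' (huv x))
    _ = η + μ.real (u ⁻¹' band) := by
        rw [integral_add (integrable_const _) ((integrable_const 1).indicator hband),
          integral_const, integral_indicator_one hband]
        simp
    _ ≤ (1 + 4 * M) * η := by linarith

theorem stmt13_general {Ω : Type*} [MeasurableSpace Ω] (P : Measure Ω)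
    {d : ℕ} (μX : Measure (Fin d → ℝ)) [IsProbabilityMeasure μX]
    {E : Type*} [NormedAddCommGroup E] (B : Set E)
    (α M : ℝ) (hM : 0 ≤ M)
    (p₀ : (Fin d → ℝ) → E → ℝ) (hp₀ : ∀ β, Measurable fun x => p₀ x β)
    (Fxy : E → ℝ)
    (hpLip : ∀ β ∈ B, ∀ β' ∈ B, ∀ x, |p₀ x β - p₀ x β'| ≤ α * ‖β - β'‖)
    (hFLip : ∀ β ∈ B, ∀ β' ∈ B, |Fxy β - Fxy β'| ≤ α * ‖β - β'‖)
    (hF01 : ∀ β ∈ B, Fxy β ∈ Set.Icc (0 : ℝ) 1)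
    (hdens : ∀ β ∈ B, ∃ f : ℝ → ℝ≥0∞, Measurable f ∧
      μX.map (fun x => p₀ x β) = volume.withDensity f ∧
      ∀ᵐ t ∂(volume : Measure ℝ), f t ≤ ENNReal.ofReal M)
    (β₀ : E) (hβ₀ : β₀ ∈ B)
    (βhat : ℕ → Ω → E)
    (hβhatB : ∀ n ω, βhat n ω ∈ B)
    (hprob : TendstoInMeasure P βhat atTop (fun _ => β₀)) :
    TendstoInMeasure P
      (fun n ω => ∫ x,
        (Fxy β₀ * (if p₀ x β₀ ≤ Fxy β₀ then (1 : ℝ) else 0)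
          - Fxy (βhat n ω) * (if p₀ x (βhat n ω) ≤ Fxy (βhat n ω) then (1 : ℝ) else 0)) ^ 2
        ∂μX)
      atTop (fun _ => (0 : ℝ)) := by
  set e : E → ℝ := fun β => ∫ x, (Fxy β₀ * (if p₀ x β₀ ≤ Fxy β₀ then (1 : ℝ) else 0)
    - Fxy β * (if p₀ x β ≤ Fxy β then (1 : ℝ) else 0)) ^ 2 ∂μX
  obtain ⟨f, -, hmap, hf⟩ := hdens β₀ hβ₀
  have he_le : ∀ β ∈ B, e β ≤ (1 + 4 * M) * (α * ‖β - β₀‖) := fun β hβ =>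
    integral_sq_sub_mul_ite_le (hp₀ β₀) hM (hF01 β₀ hβ₀) (hF01 β hβ)
      (norm_sub_rev β β₀ ▸ hFLip β₀ hβ₀ β hβ)
      (fun x => norm_sub_rev β β₀ ▸ hpLip β₀ hβ₀ β hβ x) hmap hf
  have he_cont : ContinuousWithinAt e B β₀ := by
    have hlim : Tendsto (fun β => (1 + 4 * M) * (α * ‖β - β₀‖)) (𝓝[B] β₀) (𝓝 0) := by
      have hcont : Continuous fun β => (1 + 4 * M) * (α * ‖β - β₀‖) := by fun_prop
      simpa using (hcont.continuousWithinAt (s := B) (x := β₀)).tendsto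
    have he₀ : e β₀ = 0 := by simp [e]
    rw [ContinuousWithinAt, he₀]
    exact tendsto_of_tendsto_of_tendsto_of_le_of_le' tendsto_const_nhds hlim
      (.of_forall fun _ => integral_nonneg fun _ => sq_nonneg _)
      (eventually_nhdsWithin_of_forall he_le)
  simpa [e] using hprob.comp_continuousWithinAt he_cont hβhatB

/-- Lemma A.2, limit form: In the parametrized family, suppose for all
`β, β′ ∈ B` the Lipschitz bounds `|p₀(x,β) − p₀(x,β′)| ≤ α‖β − β′‖` and
`|F(y|x,β) − F(y|x,β′)| ≤ α‖β − β′‖` hold, `F(y|x,β) ∈ [0,1]`, and for each `β ∈ B`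
the law of `p₀(X̃,β)` (with `X̃` an independent copy of the covariate vector, of law
`μX`) has a Lebesgue density bounded by `M`.  If `β̂_n → β₀` in probability, then
`e_n = E_{X̃}[(F(y|x,β₀)·1{p₀(X̃,β₀) ≤ F(y|x,β₀)}
        − F(y|x,β̂_n)·1{p₀(X̃,β̂_n) ≤ F(y|x,β̂_n)})²] → 0` in probability. -/
theorem stmt13 {Ω : Type*} [MeasurableSpace Ω] (P : Measure Ω) [IsProbabilityMeasure P]
    {d : ℕ} (μX : Measure (Fin d → ℝ)) [IsProbabilityMeasure μX]
    {E : Type*} [NormedAddCommGroup E] [MeasurableSpace E] [BorelSpace E] (B : Set E)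
    (α M : ℝ) (hα : 0 ≤ α) (hM : 0 ≤ M)
    (p₀ : (Fin d → ℝ) → E → ℝ) (hp₀ : ∀ β, Measurable fun x => p₀ x β)
    (Fxy : E → ℝ)
    (hpLip : ∀ β ∈ B, ∀ β' ∈ B, ∀ x, |p₀ x β - p₀ x β'| ≤ α * ‖β - β'‖)
    (hFLip : ∀ β ∈ B, ∀ β' ∈ B, |Fxy β - Fxy β'| ≤ α * ‖β - β'‖)
    (hF01 : ∀ β ∈ B, Fxy β ∈ Set.Icc (0 : ℝ) 1)
    (hdens : ∀ β ∈ B, ∃ f : ℝ → ℝ≥0∞, Measurable f ∧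
      μX.map (fun x => p₀ x β) = volume.withDensity f ∧
      ∀ᵐ t ∂(volume : Measure ℝ), f t ≤ ENNReal.ofReal M)
    (β₀ : E) (hβ₀ : β₀ ∈ B)
    (βhat : ℕ → Ω → E) (hβhatmeas : ∀ n, Measurable (βhat n))
    (hβhatB : ∀ n ω, βhat n ω ∈ B)
    (hprob : TendstoInMeasure P βhat atTop (fun _ => β₀)) :
    TendstoInMeasure P
      (fun n ω => ∫ x,
        (Fxy β₀ * (if p₀ x β₀ ≤ Fxy β₀ then (1 : ℝ) else 0)
          - Fxy (βhat n ω) * (if p₀ x (βhat n ω) ≤ Fxy (βhat n ω) then (1 : ℝ) else 0)) ^ 2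
        ∂μX)
      atTop (fun _ => (0 : ℝ)) :=
  stmt13_general P μX B α M hM p₀ hp₀ Fxy hpLip hFLip hF01 hdens β₀ hβ₀ βhat hβhatB hprob
end
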